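/- arXiv:1507.07500 — 8 statements merged into one kernel-verified Lean document; each statement's English description precedes it below -/
import Mathlib

section
/- Let J and K be nonempty compact intervals of real numbers and let f : J → ℝ be a continuous function such that f(J) ⊇ K. Then there exists a nonempty compact interval L ⊆ J such that f(L) = K. -/
open Set

/-- Helper: if `f p = c`, `f q = d` with `p ≤ q` in `[a,b]`, then some
subinterval of `[a,b]` maps exactly onto `[c,d]`. -/
lemma key_subinterval (a b c d : ℝ) (hcd : c ≤ d) (f : ℝ → ℝ)
    (hcont : ContinuousOn f (Set.Icc a b))
    (p q : ℝ) (hp : p ∈ Set.Icc a b) (hq : q ∈ Set.Icc a b) (hpq : p ≤ q)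
    (hfp : f p = c) (hfq : f q = d) :
    ∃ u v : ℝ, u ≤ v ∧ Set.Icc u v ⊆ Set.Icc a b ∧
      f '' Set.Icc u v = Set.Icc c d := by
  have hsub : Set.Icc p q ⊆ Set.Icc a b := Set.Icc_subset_Icc hp.1 hq.2
  have hcont' : ContinuousOn f (Set.Icc p q) := hcont.mono hsub
  -- S : points of [p,q] mapping to d
  set S : Set ℝ := Set.Icc p q ∩ f ⁻¹' {d} with hS
  have hSclosed : IsClosed S :=
    hcont'.preimage_isClosed_of_isClosed isClosed_Icc isClosed_singleton
  have hSne : S.Nonempty := ⟨q, Set.right_mem_Icc.2 hpq, by simp [hfq]⟩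
  have hSbdd : BddBelow S := (IsCompact.of_isClosed_subset isCompact_Icc hSclosed
    (Set.inter_subset_left)).bddBelow
  set v : ℝ := sInf S with hv
  have hvS : v ∈ S := hSclosed.csInf_mem hSne hSbdd
  have hvIcc : v ∈ Set.Icc p q := hvS.1
  have hfv : f v = d := hvS.2
  -- T : points of [p,v] mapping to c
  have hsub2 : Set.Icc p v ⊆ Set.Icc p q := Set.Icc_subset_Icc le_rfl hvIcc.2
  set T : Set ℝ := Set.Icc p v ∩ f ⁻¹' {c} with hT
  have hTclosed : IsClosed T :=
    (hcont'.mono hsub2).preimage_isClosed_of_isClosed isClosed_Icc isClosed_singleton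
  have hTne : T.Nonempty := ⟨p, Set.left_mem_Icc.2 hvIcc.1, by simp [hfp]⟩
  have hTbdd : BddAbove T := (IsCompact.of_isClosed_subset isCompact_Icc hTclosed
    (Set.inter_subset_left)).bddAbove
  set u : ℝ := sSup T with hu
  have huT : u ∈ T := hTclosed.csSup_mem hTne hTbdd
  have huIcc : u ∈ Set.Icc p v := huT.1
  have hfu : f u = c := huT.2
  have huv : u ≤ v := huIcc.2
  have hsubuv : Set.Icc u v ⊆ Set.Icc a b :=
    (Set.Icc_subset_Icc huIcc.1 le_rfl).trans (hsub2.trans hsub)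
  have hcontuv : ContinuousOn f (Set.Icc u v) := hcont.mono hsubuv
  refine ⟨u, v, huv, hsubuv, ?_⟩
  apply Set.Subset.antisymm
  · rintro y ⟨x, hx, rfl⟩
    constructor
    · by_contra h
      push_neg at h
      -- f x < c, find y ∈ [x, v] with f y = c, contradiction with u = sSup T
      have : c ∈ Set.Icc (f x) (f v) := ⟨le_of_lt h, hfv ▸ hcd⟩
      obtain ⟨y, hy, hfy⟩ := intermediate_value_Icc hx.2
        (hcontuv.mono (Set.Icc_subset_Icc hx.1 le_rfl)) this
      have hyT : y ∈ T := ⟨⟨huIcc.1.trans (hx.1.trans hy.1), hy.2⟩, hfy⟩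
      have : y ≤ u := le_csSup hTbdd hyT
      have hxeq : x = u := le_antisymm (hy.1.trans this) hx.1
      rw [hxeq, hfu] at h
      exact lt_irrefl c h
    · by_contra h
      push_neg at h
      -- f x > d, find y ∈ [u, x] with f y = d, contradiction with v = sInf S
      have : d ∈ Set.Icc (f u) (f x) := ⟨hfu ▸ hcd, le_of_lt h⟩
      obtain ⟨y, hy, hfy⟩ := intermediate_value_Icc hx.1
        (hcontuv.mono (Set.Icc_subset_Icc le_rfl hx.2)) this
      have hyS : y ∈ S := ⟨⟨huIcc.1.trans hy.1, (hy.2.trans hx.2).trans hvIcc.2⟩, hfy⟩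
      have : v ≤ y := csInf_le hSbdd hyS
      have hxeq : x = v := le_antisymm hx.2 (this.trans hy.2)
      rw [hxeq, hfv] at h
      exact lt_irrefl d h
  · have := intermediate_value_Icc huv hcontuv
    rw [hfu, hfv] at this
    exact this

/-- If `J = [a, b]` and `K = [c, d]` are nonempty compact intervals and
`f : J → ℝ` is continuous with `f(J) ⊇ K`, then there is a nonempty compact
interval `L ⊆ J` with `f(L) = K`. -/
theorem exists_subinterval_mapping_onto
    (a b c d : ℝ) (hab : a ≤ b) (hcd : c ≤ d)
    (f : ℝ → ℝ)
    (hcont : ContinuousOn f (Set.Icc a b))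
    (himage : Set.Icc c d ⊆ f '' Set.Icc a b) :
    ∃ u v : ℝ, u ≤ v ∧ Set.Icc u v ⊆ Set.Icc a b ∧
      f '' Set.Icc u v = Set.Icc c d := by
  obtain ⟨p, hp, hfp⟩ := himage (Set.left_mem_Icc.2 hcd)
  obtain ⟨q, hq, hfq⟩ := himage (Set.right_mem_Icc.2 hcd)
  rcases le_total p q with hpq | hqp
  · exact key_subinterval a b c d hcd f hcont p q hp hq hpq hfp hfq
  · -- reflect: g x = f (a + b - x)
    set g : ℝ → ℝ := fun x => f (a + b - x) with hg
    have hrefl : ∀ x ∈ Set.Icc a b, a + b - x ∈ Set.Icc a b := by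
      intro x hx
      constructor <;> [linarith [hx.2]; linarith [hx.1]]
    have hgcont : ContinuousOn g (Set.Icc a b) := by
      apply hcont.comp (by fun_prop) hrefl
    have hp' : a + b - p ∈ Set.Icc a b := hrefl p hp
    have hq' : a + b - q ∈ Set.Icc a b := hrefl q hq
    have hpq' : a + b - p ≤ a + b - q := by linarith
    obtain ⟨u, v, huv, hsub, himg⟩ :=
      key_subinterval a b c d hcd g hgcont (a + b - p) (a + b - q) hp' hq' hpq'
        (by simp [hg, hfp]) (by simp [hg, hfq])
    refine ⟨a + b - v, a + b - u, by linarith, ?_, ?_⟩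
    · intro x hx
      constructor
      · have := (hsub ⟨(by linarith [hx.2] : u ≤ a + b - x), by linarith [hx.1]⟩).1
        linarith [hsub ⟨(by linarith [hx.2] : u ≤ a + b - x), (by linarith [hx.1] : a + b - x ≤ v)⟩ |>.2]
      · linarith [(hsub ⟨(by linarith [hx.2] : u ≤ a + b - x), (by linarith [hx.1] : a + b - x ≤ v)⟩).1]
    · rw [← himg]
      have : Set.Icc (a + b - v) (a + b - u) = (fun x => a + b - x) '' Set.Icc u v := by
        rw [Set.image_const_sub_Icc]
      rw [this, ← Set.image_comp]
      rfl
end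

section
/- Let g : ℝ → ℝ be a function and let I₁, I₂, …, I_k (k ≥ 2) be compact, pairwise disjoint, nondegenerate intervals such that for every m ∈ {1, …, k}, g is continuous on I_m and g(I_m) ⊇ I₁ ∪ I₂ ∪ ⋯ ∪ I_k. Then for each n ∈ ℕ, g has at least k·(k−1)^{n−1} periodic points of prime period n; in particular, g has periodic points of every prime period. -/
open Set in
lemma helperA (f : ℝ → ℝ) (u v c d : ℝ) (huv : u ≤ v)
    (hf : ContinuousOn f (Icc u v)) (hfu : f u = c) (hfv : f v = d) (hcd : c ≤ d) :
    ∃ p q, u ≤ p ∧ p ≤ q ∧ q ≤ v ∧ f p = c ∧ f q = d ∧ f '' Icc p q ⊆ Icc c d := by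
  classical
  set A : Set ℝ := Icc u v ∩ f ⁻¹' {d} with hA
  have hAne : A.Nonempty := ⟨v, ⟨huv, le_refl v⟩, by simp [hfv]⟩
  have hAclosed : IsClosed A :=
    hf.preimage_isClosed_of_isClosed isClosed_Icc isClosed_singleton
  have hAbdd : BddBelow A := bddBelow_Icc.mono inter_subset_left
  set q := sInf A with hq
  have hqA : q ∈ A := hAclosed.csInf_mem hAne hAbdd
  have hfq : f q = d := hqA.2
  have huq : u ≤ q := hqA.1.1
  have hqv : q ≤ v := hqA.1.2
  set B : Set ℝ := Icc u q ∩ f ⁻¹' {c} with hB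
  have hBne : B.Nonempty := ⟨u, ⟨le_refl u, huq⟩, by simp [hfu]⟩
  have hBclosed : IsClosed B :=
    (hf.mono (Icc_subset_Icc le_rfl hqv)).preimage_isClosed_of_isClosed isClosed_Icc
      isClosed_singleton
  have hBbdd : BddAbove B := bddAbove_Icc.mono inter_subset_left
  set p := sSup B with hp
  have hpB : p ∈ B := hBclosed.csSup_mem hBne hBbdd
  have hfp : f p = c := hpB.2
  have hup : u ≤ p := hpB.1.1
  have hpq : p ≤ q := hpB.1.2
  refine ⟨p, q, hup, hpq, hqv, hfp, hfq, ?_⟩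
  rintro y ⟨x, hx, rfl⟩
  constructor
  · by_contra hlt
    push_neg at hlt
    have hxp : p < x := lt_of_le_of_ne hx.1 (by rintro rfl; rw [hfp] at hlt; exact hlt.false)
    have hxq : x < q := lt_of_le_of_ne hx.2 (by rintro rfl; rw [hfq] at hlt; linarith)
    have hsub : Icc x q ⊆ Icc u v := Icc_subset_Icc (hup.trans hxp.le) hqv
    have := intermediate_value_Icc hxq.le (hf.mono hsub)
    obtain ⟨y, hy, hyc⟩ := this (show c ∈ Icc (f x) (f q) from ⟨hlt.le, by rw [hfq]; exact hcd⟩)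
    have hyB : y ∈ B := ⟨⟨(hup.trans hxp.le).trans hy.1, hy.2⟩, by simp [hyc]⟩
    have := le_csSup hBbdd hyB
    have : x ≤ p := le_trans hy.1 this |>.trans le_rfl
    linarith
  · by_contra hlt
    push_neg at hlt
    have hxq : x < q := lt_of_le_of_ne hx.2 (by rintro rfl; rw [hfq] at hlt; exact hlt.false)
    have hsub : Icc p x ⊆ Icc u v := Icc_subset_Icc hup (hx.2.trans hqv)
    have := intermediate_value_Icc hx.1 (hf.mono hsub)
    obtain ⟨y, hy, hyd⟩ := this (show d ∈ Icc (f p) (f x) from ⟨by rw [hfp]; exact hcd, hlt.le⟩)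
    have hyA : y ∈ A := ⟨⟨hup.trans hy.1, (hy.2.trans hx.2).trans hqv⟩, by simp [hyd]⟩
    have := csInf_le hAbdd hyA
    linarith [hy.2]

open Set in
lemma lemA (f : ℝ → ℝ) (u v c d : ℝ) (huv : u ≤ v) (hcd : c ≤ d)
    (hf : ContinuousOn f (Icc u v)) (hsub : Icc c d ⊆ f '' Icc u v) :
    ∃ p q, p ≤ q ∧ Icc p q ⊆ Icc u v ∧ f '' Icc p q = Icc c d := by
  obtain ⟨x₀, hx₀, hfx₀⟩ := hsub (left_mem_Icc.mpr hcd)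
  obtain ⟨x₁, hx₁, hfx₁⟩ := hsub (right_mem_Icc.mpr hcd)
  rcases le_total x₀ x₁ with h01 | h10
  · obtain ⟨p, q, hup, hpq, hqv, hfp, hfq, himg⟩ :=
      helperA f x₀ x₁ c d h01 (hf.mono (Icc_subset_Icc hx₀.1 hx₁.2)) hfx₀ hfx₁ hcd
    have hIcc : Icc p q ⊆ Icc u v := Icc_subset_Icc (hx₀.1.trans hup) (hqv.trans hx₁.2)
    refine ⟨p, q, hpq, hIcc, Subset.antisymm himg ?_⟩
    have := intermediate_value_Icc hpq (hf.mono hIcc)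
    rw [hfp, hfq] at this
    exact this
  · set F : ℝ → ℝ := fun y => f (x₀ + x₁ - y) with hF
    have hmaps : MapsTo (fun y => x₀ + x₁ - y) (Icc x₁ x₀) (Icc x₁ x₀) := by
      intro y hy
      simp only [mem_Icc] at hy ⊢
      constructor <;> linarith
    have hFcont : ContinuousOn F (Icc x₁ x₀) :=
      ContinuousOn.comp (hf.mono (Icc_subset_Icc hx₁.1 hx₀.2)) (by fun_prop) hmaps
    have hFx₁ : F x₁ = c := by
      simp only [hF]; rw [show x₀ + x₁ - x₁ = x₀ by ring]; exact hfx₀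
    have hFx₀ : F x₀ = d := by
      simp only [hF]; rw [show x₀ + x₁ - x₀ = x₁ by ring]; exact hfx₁
    obtain ⟨p, q, hup, hpq, hqv, hFp, hFq, himg⟩ :=
      helperA F x₁ x₀ c d h10 hFcont hFx₁ hFx₀ hcd
    refine ⟨x₀ + x₁ - q, x₀ + x₁ - p, by linarith, ?_, ?_⟩
    · apply Icc_subset_Icc <;> [skip; skip] <;> · nlinarith [hx₀.1, hx₀.2, hx₁.1, hx₁.2]
    · have himeq : f '' Icc (x₀ + x₁ - q) (x₀ + x₁ - p) = F '' Icc p q := by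
        rw [show Icc (x₀ + x₁ - q) (x₀ + x₁ - p) = (fun y => x₀ + x₁ - y) '' Icc p q by
          rw [Set.image_const_sub_Icc]]
        rw [← Set.image_comp]
        rfl
      rw [himeq]
      apply Subset.antisymm himg
      have := intermediate_value_Icc hpq (hFcont.mono (Icc_subset_Icc hup hqv))
      rw [hFp, hFq] at this
      exact this

open Set in
lemma chainLem (g : ℝ → ℝ) (k : ℕ) (a b : Fin k → ℝ)
    (hnondeg : ∀ m, a m < b m)
    (hcont : ∀ m, ContinuousOn g (Icc (a m) (b m)))
    (hcover : ∀ m, (⋃ j, Icc (a j) (b j)) ⊆ g '' Icc (a m) (b m)) :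
    ∀ (n : ℕ) (s : ℕ → Fin k) (m : Fin k),
      ∃ p q, p ≤ q ∧ Icc p q ⊆ Icc (a (s 0)) (b (s 0)) ∧
        g^[n+1] '' Icc p q = Icc (a m) (b m) ∧
        ∀ i ≤ n, g^[i] '' Icc p q ⊆ Icc (a (s i)) (b (s i)) := by
  intro n
  induction n with
  | zero =>
    intro s m
    obtain ⟨p, q, hpq, hsub, himg⟩ := lemA g (a (s 0)) (b (s 0)) (a m) (b m)
      (hnondeg _).le (hnondeg m).le (hcont _)
      ((subset_iUnion (fun j => Icc (a j) (b j)) m).trans (hcover (s 0)))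
    refine ⟨p, q, hpq, hsub, by simpa using himg, ?_⟩
    intro i hi
    interval_cases i
    simpa using hsub
  | succ n ih =>
    intro s m
    obtain ⟨p, q, hpq, hsub, himg, hinter⟩ := ih (fun i => s (i+1)) m
    obtain ⟨p', q', hpq', hsub', himg'⟩ := lemA g (a (s 0)) (b (s 0)) p q
      (hnondeg _).le hpq (hcont _)
      (hsub.trans ((subset_iUnion (fun j => Icc (a j) (b j)) (s 1)).trans (hcover (s 0))))
    refine ⟨p', q', hpq', hsub', ?_, ?_⟩
    · rw [show n + 1 + 1 = (n + 1) + 1 from rfl, Function.iterate_succ, Set.image_comp,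
        himg', himg]
    · intro i hi
      cases i with
      | zero => simpa using hsub'
      | succ j =>
        rw [Function.iterate_succ, Set.image_comp, himg']
        exact hinter j (by omega)


open Set in
lemma orbitLem (g : ℝ → ℝ) (k : ℕ) (a b : Fin k → ℝ)
    (hnondeg : ∀ m, a m < b m)
    (hcont : ∀ m, ContinuousOn g (Icc (a m) (b m)))
    (hcover : ∀ m, (⋃ j, Icc (a j) (b j)) ⊆ g '' Icc (a m) (b m)) :
    ∀ (n : ℕ) (s : ℕ → Fin k),
      ∃ x, g^[n+1] x = x ∧ ∀ i ≤ n, g^[i] x ∈ Icc (a (s i)) (b (s i)) := by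
  intro n s
  obtain ⟨p, q, hpq, hsub, himg, hinter⟩ := chainLem g k a b hnondeg hcont hcover n s (s 0)
  have hcontIt : ∀ i, i ≤ n + 1 → ContinuousOn (g^[i]) (Icc p q) := by
    intro i
    induction i with
    | zero => intro _; simpa using continuousOn_id
    | succ j ihj =>
      intro hj
      rw [Function.iterate_succ']
      exact ContinuousOn.comp (hcont (s j)) (ihj (by omega))
        (fun x hx => hinter j (by omega) (mem_image_of_mem _ hx))
  have hconN := hcontIt (n+1) le_rfl
  have hav : a (s 0) ∈ g^[n+1] '' Icc p q := by
    rw [himg]; exact ⟨le_rfl, (hnondeg _).le⟩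
  have hbv : b (s 0) ∈ g^[n+1] '' Icc p q := by
    rw [himg]; exact ⟨(hnondeg _).le, le_rfl⟩
  obtain ⟨u, hu, hgu⟩ := hav
  obtain ⟨v, hv, hgv⟩ := hbv
  have hu' : g^[n+1] u ≤ u := by rw [hgu]; exact (hsub hu).1
  have hv' : v ≤ g^[n+1] v := by rw [hgv]; exact (hsub hv).2
  have huIcc : uIcc u v ⊆ Icc p q := by
    rw [Set.uIcc]
    exact Icc_subset_Icc (le_inf hu.1 hv.1) (sup_le hu.2 hv.2)
  have hφ : ContinuousOn (fun x => g^[n+1] x - x) (uIcc u v) :=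
    (hconN.mono huIcc).sub continuousOn_id
  have h0 : (0:ℝ) ∈ uIcc (g^[n+1] u - u) (g^[n+1] v - v) := by
    rw [Set.mem_uIcc]
    left
    exact ⟨by linarith, by linarith⟩
  obtain ⟨x, hxmem, hx0⟩ := intermediate_value_uIcc hφ h0
  exact ⟨x, sub_eq_zero.mp hx0,
    fun i hi => hinter i hi (mem_image_of_mem _ (huIcc hxmem))⟩

open Set in
def seqOf (k n' : ℕ) (σ : (c : Fin k) × (Fin n' → {j : Fin k // j ≠ c})) : ℕ → Fin k :=
  fun i =>
    if h : i % (n' + 1) = 0 then σ.1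
    else (σ.2 ⟨i % (n' + 1) - 1, by
      have := Nat.mod_lt i (show 0 < n' + 1 by omega); omega⟩).1

lemma seqOf_zero (k n' : ℕ) (σ : (c : Fin k) × (Fin n' → {j : Fin k // j ≠ c})) :
    seqOf k n' σ 0 = σ.1 := by simp [seqOf]

lemma seqOf_pos (k n' : ℕ) (σ : (c : Fin k) × (Fin n' → {j : Fin k // j ≠ c}))
    (i : ℕ) (h1 : 1 ≤ i) (h2 : i ≤ n') :
    seqOf k n' σ i = (σ.2 ⟨i - 1, by omega⟩).1 := by
  have hm : i % (n' + 1) = i := Nat.mod_eq_of_lt (by omega)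
  simp only [seqOf]
  rw [dif_neg (by omega)]
  congr 1
  ext
  simp [hm]

lemma seqOf_pos_ne (k n' : ℕ) (σ : (c : Fin k) × (Fin n' → {j : Fin k // j ≠ c}))
    (i : ℕ) (h1 : 1 ≤ i) (h2 : i ≤ n') :
    seqOf k n' σ i ≠ σ.1 := by
  rw [seqOf_pos k n' σ i h1 h2]
  exact (σ.2 ⟨i - 1, by omega⟩).2

lemma seqOf_inj (k n' : ℕ) (σ τ : (c : Fin k) × (Fin n' → {j : Fin k // j ≠ c}))
    (h : ∀ i ≤ n', seqOf k n' σ i = seqOf k n' τ i) : σ = τ := by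
  obtain ⟨c, t⟩ := σ
  obtain ⟨c', t'⟩ := τ
  have hc : c = c' := by
    have := h 0 (Nat.zero_le _)
    rwa [seqOf_zero, seqOf_zero] at this
  subst hc
  have ht : t = t' := by
    funext j
    apply Subtype.ext
    have := h (j.1 + 1) (by omega)
    rw [seqOf_pos k n' ⟨c, t⟩ (j.1+1) (by omega) (by omega),
        seqOf_pos k n' ⟨c, t'⟩ (j.1+1) (by omega) (by omega)] at this
    simpa using this
  rw [ht]

lemma cardT (k n' : ℕ) :
    Fintype.card ((c : Fin k) × (Fin n' → {j : Fin k // j ≠ c})) = k * (k - 1) ^ n' := by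
  rw [Fintype.card_sigma]
  have hc : ∀ c : Fin k, Fintype.card (Fin n' → {j : Fin k // j ≠ c}) = (k - 1) ^ n' := by
    intro c
    rw [Fintype.card_fun]
    congr 1
    · have : Fintype.card {j : Fin k // j ≠ c} = Fintype.card (Fin k) - 1 := by
        rw [Fintype.card_subtype_compl (p := fun j => j = c)]
        simp [Fintype.card_subtype_eq]
      simpa using this
    · simp
  simp only [hc]
  simp [Finset.sum_const, mul_comm]

open Set in
/-- If `g : ℝ → ℝ` and `I₁, …, I_k` (`k ≥ 2`) are compact, pairwise disjoint,
nondegenerate intervals such that `g` is continuous on each `I_m` and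
`g(I_m) ⊇ I₁ ∪ ⋯ ∪ I_k` for every `m`, then for each `n ≥ 1`, `g` has at
least `k·(k−1)^(n−1)` periodic points of prime period `n`. -/
theorem periodic_points_of_covering_intervals
    (g : ℝ → ℝ) (k : ℕ) (hk : 2 ≤ k)
    (a b : Fin k → ℝ)
    (hnondeg : ∀ m, a m < b m)
    (hdisj : ∀ m j, m ≠ j → Disjoint (Set.Icc (a m) (b m)) (Set.Icc (a j) (b j)))
    (hcont : ∀ m, ContinuousOn g (Set.Icc (a m) (b m)))
    (hcover : ∀ m, (⋃ j, Set.Icc (a j) (b j)) ⊆ g '' Set.Icc (a m) (b m)) :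
    ∀ n : ℕ, 1 ≤ n →
      ∃ S : Finset ℝ, k * (k - 1) ^ (n - 1) ≤ S.card ∧
        ∀ x ∈ S, g^[n] x = x ∧ ∀ m : ℕ, 1 ≤ m → m < n → g^[m] x ≠ x := by
  intro n hn
  obtain ⟨n', rfl⟩ : ∃ n', n = n' + 1 := ⟨n - 1, by omega⟩
  classical
  choose x hx1 hx2 using fun σ : (c : Fin k) × (Fin n' → {j : Fin k // j ≠ c}) =>
    orbitLem g k a b hnondeg hcont hcover n' (seqOf k n' σ)
  have hxinj : Function.Injective x := by
    intro σ τ hxy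
    by_contra hne
    have hex : ∃ i, i ≤ n' ∧ seqOf k n' σ i ≠ seqOf k n' τ i := by
      by_contra hall
      push_neg at hall
      exact hne (seqOf_inj k n' σ τ hall)
    obtain ⟨i, hi, hne'⟩ := hex
    have h1 : g^[i] (x σ) ∈ Icc (a (seqOf k n' σ i)) (b (seqOf k n' σ i)) := hx2 σ i hi
    have h2 : g^[i] (x σ) ∈ Icc (a (seqOf k n' τ i)) (b (seqOf k n' τ i)) := by
      rw [hxy]; exact hx2 τ i hi
    exact absurd h2 (Set.disjoint_left.mp (hdisj _ _ hne') h1)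
  refine ⟨Finset.image x Finset.univ, ?_, ?_⟩
  · rw [Finset.card_image_of_injective _ hxinj, Finset.card_univ, cardT]
    simp
  · intro y hy
    obtain ⟨σ, _, rfl⟩ := Finset.mem_image.mp hy
    refine ⟨hx1 σ, ?_⟩
    intro m hm1 hm2 hcontra
    have h1 : g^[m] (x σ) ∈ Icc (a (seqOf k n' σ m)) (b (seqOf k n' σ m)) :=
      hx2 σ m (by omega)
    have h0 : x σ ∈ Icc (a (seqOf k n' σ 0)) (b (seqOf k n' σ 0)) := by
      simpa using hx2 σ 0 (Nat.zero_le _)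
    rw [hcontra] at h1
    rw [seqOf_zero] at h0
    exact absurd h0 (Set.disjoint_left.mp
      (hdisj _ _ (seqOf_pos_ne k n' σ m hm1 (by omega))) h1)
end

section
/- Let g : ℝ → ℝ be a function and let I₁, I₂, …, I_k (k ≥ 2) be compact, pairwise disjoint, nondegenerate intervals such that for every m ∈ {1, …, k}, g is continuous on I_m and g(I_m) ⊇ I₁ ∪ I₂ ∪ ⋯ ∪ I_k. Then the set of all real numbers a for which the orbit sequence (gⁿ(a))_{n∈ℕ} does not converge (to any real limit) is uncountable. -/
open Set Filter



lemma keyA0 (f : ℝ → ℝ) {u v p q : ℝ} (huv : u ≤ v) (hpq : p ≤ q)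
    (hf : ContinuousOn f (Icc u v)) (hfu : f u = p) (hfv : f v = q) :
    ∃ c d, u ≤ c ∧ c ≤ d ∧ d ≤ v ∧ f '' Icc c d = Icc p q := by
  set S := Icc u v ∩ f ⁻¹' {q} with hS
  have hSne : S.Nonempty := ⟨v, ⟨huv, le_refl v⟩, hfv⟩
  have hSclosed : IsClosed S := hf.preimage_isClosed_of_isClosed isClosed_Icc isClosed_singleton
  have hSbdd : BddBelow S := ⟨u, fun x hx => hx.1.1⟩
  set d := sInf S with hd
  have hdS : d ∈ S := hSclosed.csInf_mem hSne hSbdd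
  have hud : u ≤ d := hdS.1.1
  have hdv : d ≤ v := hdS.1.2
  have hfd : f d = q := hdS.2
  set T := Icc u d ∩ f ⁻¹' {p} with hT
  have hTne : T.Nonempty := ⟨u, ⟨le_refl u, hud⟩, hfu⟩
  have hTclosed : IsClosed T :=
    (hf.mono (Icc_subset_Icc le_rfl hdv)).preimage_isClosed_of_isClosed isClosed_Icc isClosed_singleton
  have hTbdd : BddAbove T := ⟨d, fun x hx => hx.1.2⟩
  set c := sSup T with hc
  have hcT : c ∈ T := hTclosed.csSup_mem hTne hTbdd
  have huc : u ≤ c := hcT.1.1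
  have hcd : c ≤ d := hcT.1.2
  have hfc : f c = p := hcT.2
  have hfcd : ContinuousOn f (Icc c d) := hf.mono (Icc_subset_Icc huc hdv)
  refine ⟨c, d, huc, hcd, hdv, subset_antisymm ?_ ?_⟩
  · rintro y ⟨t, ht, rfl⟩
    constructor
    · by_contra hlt
      push_neg at hlt
      have hiv : Icc (f t) (f d) ⊆ f '' Icc t d :=
        intermediate_value_Icc ht.2 (hfcd.mono (Icc_subset_Icc ht.1 le_rfl))
      obtain ⟨w, hw, hfw⟩ := hiv ⟨hlt.le, hfd ▸ hpq⟩
      have hwT : w ∈ T := ⟨⟨by linarith [ht.1, hw.1], hw.2⟩, hfw⟩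
      have hwc : w ≤ c := le_csSup hTbdd hwT
      have : w = t := le_antisymm (hwc.trans ht.1) hw.1
      rw [this] at hfw
      linarith
    · by_contra hlt
      push_neg at hlt
      have hiv : Icc (f c) (f t) ⊆ f '' Icc c t :=
        intermediate_value_Icc ht.1 (hfcd.mono (Icc_subset_Icc le_rfl ht.2))
      obtain ⟨w, hw, hfw⟩ := hiv ⟨hfc ▸ hpq, hlt.le⟩
      have hwS : w ∈ S := ⟨⟨huc.trans hw.1, (hw.2.trans ht.2).trans hdv⟩, hfw⟩
      have hdw : d ≤ w := csInf_le hSbdd hwS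
      have : w = t := le_antisymm hw.2 (ht.2.trans hdw)
      rw [this] at hfw
      linarith
  · have h2 := intermediate_value_Icc hcd hfcd
    rw [hfc, hfd] at h2
    exact h2



lemma keyA (f : ℝ → ℝ) {u v p q : ℝ} (huv : u ≤ v) (hpq : p ≤ q)
    (hf : ContinuousOn f (Icc u v)) (hsub : Icc p q ⊆ f '' Icc u v) :
    ∃ c d, u ≤ c ∧ c ≤ d ∧ d ≤ v ∧ f '' Icc c d = Icc p q := by
  obtain ⟨u', hu', hfu'⟩ := hsub (left_mem_Icc.mpr hpq)
  obtain ⟨v', hv', hfv'⟩ := hsub (right_mem_Icc.mpr hpq)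
  rcases le_total u' v' with h | h
  · obtain ⟨c, d, h1, h2, h3, h4⟩ :=
      keyA0 f h hpq (hf.mono (Icc_subset_Icc hu'.1 hv'.2)) hfu' hfv'
    exact ⟨c, d, hu'.1.trans h1, h2, h3.trans hv'.2, h4⟩
  · have hmaps : MapsTo (fun x : ℝ => -x) (Icc (-u') (-v')) (Icc u v) := by
      intro x hx
      simp only [mem_Icc] at hx ⊢
      constructor <;> [linarith [hv'.1]; linarith [hu'.2]]
    have hcont2 : ContinuousOn (f ∘ fun x : ℝ => -x) (Icc (-u') (-v')) :=
      hf.comp (continuous_neg.continuousOn) hmaps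
    obtain ⟨c, d, h1, h2, h3, h4⟩ := keyA0 (f ∘ fun x : ℝ => -x) (by linarith) hpq hcont2
      (by simpa using hfu') (by simpa using hfv')
    refine ⟨-d, -c, ?_, by linarith, ?_, ?_⟩
    · linarith [hv'.1]
    · linarith [hu'.2]
    · rw [← h4, Set.image_comp]
      have himg : (fun x : ℝ => -x) '' Icc c d = Icc (-d) (-c) := by
        ext x
        simp only [Set.mem_image, Set.mem_Icc]
        constructor
        · rintro ⟨y, hy, rfl⟩; exact ⟨by linarith [hy.2], by linarith [hy.1]⟩
        · rintro ⟨hx1, hx2⟩; exact ⟨-x, ⟨by linarith, by linarith⟩, by ring⟩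
      rw [himg]

open Classical in
noncomputable def chain {α : Type*} (P : ℕ → α → Prop) (Q : α → α → Prop)
    (hstep : ∀ n x, P n x → ∃ y, P (n+1) y ∧ Q x y) (x0 : α) : ℕ → α
  | 0 => x0
  | n+1 => if h : P n (chain P Q hstep x0 n) then (hstep n _ h).choose
           else chain P Q hstep x0 n

lemma chain_prop {α : Type*} (P : ℕ → α → Prop) (Q : α → α → Prop)
    (hstep : ∀ n x, P n x → ∃ y, P (n+1) y ∧ Q x y) (x0 : α) (h0 : P 0 x0) :
    ∀ n, P n (chain P Q hstep x0 n)
  | 0 => h0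
  | n+1 => by
    have ih := chain_prop P Q hstep x0 h0 n
    simp only [chain, dif_pos ih]
    exact (hstep n _ ih).choose_spec.1

lemma chain_step {α : Type*} (P : ℕ → α → Prop) (Q : α → α → Prop)
    (hstep : ∀ n x, P n x → ∃ y, P (n+1) y ∧ Q x y) (x0 : α) (h0 : P 0 x0) (n : ℕ) :
    Q (chain P Q hstep x0 n) (chain P Q hstep x0 (n+1)) := by
  have ih := chain_prop P Q hstep x0 h0 n
  simp only [chain, dif_pos ih]
  exact (hstep n _ ih).choose_spec.2

lemma exists_itinerary (g : ℝ → ℝ) (k : ℕ) (a b : Fin k → ℝ)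
    (hnondeg : ∀ m, a m < b m)
    (hcont : ∀ m, ContinuousOn g (Set.Icc (a m) (b m)))
    (hcover : ∀ m, (⋃ j, Set.Icc (a j) (b j)) ⊆ g '' Set.Icc (a m) (b m))
    (s : ℕ → Fin k) :
    ∃ x : ℝ, ∀ n, g^[n] x ∈ Set.Icc (a (s n)) (b (s n)) := by
  -- continuity of iterates on sets staying in the intervals
  have hiter : ∀ (n : ℕ) (t : Set ℝ),
      (∀ i < n, ∀ x ∈ t, g^[i] x ∈ Icc (a (s i)) (b (s i))) → ContinuousOn (g^[n]) t := by
    intro n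
    induction n with
    | zero => intro t _; simpa using continuousOn_id
    | succ n ih =>
      intro t ht
      rw [Function.iterate_succ']
      exact (hcont (s n)).comp (ih t fun i hi => ht i (by omega))
        (fun x hx => ht n (by omega) x hx)
  set P : ℕ → ℝ × ℝ → Prop := fun n cd =>
    cd.1 ≤ cd.2 ∧ (∀ i ≤ n, ∀ x ∈ Icc cd.1 cd.2, g^[i] x ∈ Icc (a (s i)) (b (s i))) ∧
      Icc (a (s n)) (b (s n)) ⊆ g^[n] '' Icc cd.1 cd.2 with hP
  set Q : ℝ × ℝ → ℝ × ℝ → Prop := fun cd cd' => cd.1 ≤ cd'.1 ∧ cd'.2 ≤ cd.2 with hQ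
  have hstep : ∀ n cd, P n cd → ∃ cd', P (n+1) cd' ∧ Q cd cd' := by
    rintro n ⟨c, d⟩ ⟨hcd, hin, hcov⟩
    have hcn : ContinuousOn (g^[n+1]) (Icc c d) :=
      hiter (n+1) _ (fun i hi x hx => hin i (by omega) x hx)
    have hsub : Icc (a (s (n+1))) (b (s (n+1))) ⊆ g^[n+1] '' Icc c d := by
      intro y hy
      have hy2 : y ∈ g '' Icc (a (s n)) (b (s n)) :=
        hcover (s n) (Set.mem_iUnion.mpr ⟨s (n+1), hy⟩)
      obtain ⟨z, hz, rfl⟩ := hy2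
      obtain ⟨w, hw, rfl⟩ := hcov hz
      exact ⟨w, hw, Function.iterate_succ_apply' g n w⟩
    obtain ⟨c', d', h1, h2, h3, h4⟩ :=
      keyA (g^[n+1]) hcd (hnondeg (s (n+1))).le hcn hsub
    refine ⟨(c', d'), ⟨h2, ?_, by rw [h4]⟩, h1, h3⟩
    intro i hi x hx
    rcases eq_or_lt_of_le hi with rfl | hlt
    · rw [← h4]; exact ⟨x, hx, rfl⟩
    · exact hin i (by omega) x (Icc_subset_Icc h1 h3 hx)
  have h0 : P 0 (a (s 0), b (s 0)) := by
    refine ⟨(hnondeg (s 0)).le, ?_, ?_⟩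
    · intro i hi x hx
      simp only [Nat.le_zero] at hi
      subst hi
      simpa using hx
    · intro y hy
      exact ⟨y, hy, by simp⟩
  set J : ℕ → ℝ × ℝ := chain P Q hstep (a (s 0), b (s 0)) with hJ
  have hprop : ∀ n, P n (J n) := chain_prop P Q hstep _ h0
  have hnest : ∀ n, Icc (J (n+1)).1 (J (n+1)).2 ⊆ Icc (J n).1 (J n).2 := by
    intro n
    have := chain_step P Q hstep _ h0 n
    exact Icc_subset_Icc this.1 this.2
  have hne : ∀ n, (Icc (J n).1 (J n).2).Nonempty := fun n => nonempty_Icc.mpr (hprop n).1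
  have hx : (⋂ n, Icc (J n).1 (J n).2).Nonempty :=
    IsCompact.nonempty_iInter_of_sequence_nonempty_isCompact_isClosed _
      hnest hne isCompact_Icc (fun n => isClosed_Icc)
  obtain ⟨x, hx⟩ := hx
  refine ⟨x, fun n => ?_⟩
  exact (hprop n).2.1 n le_rfl x (Set.mem_iInter.mp hx n)


/-- If `g : ℝ → ℝ` and `I₁, …, I_k` (`k ≥ 2`) are compact, pairwise disjoint,
nondegenerate intervals such that `g` is continuous on each `I_m` and
`g(I_m) ⊇ I₁ ∪ ⋯ ∪ I_k` for every `m`, then the set of points whose orbit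
under `g` does not converge is uncountable. -/
theorem uncountable_divergence_of_covering_intervals
    (g : ℝ → ℝ) (k : ℕ) (hk : 2 ≤ k)
    (a b : Fin k → ℝ)
    (hnondeg : ∀ m, a m < b m)
    (hdisj : ∀ m j, m ≠ j → Disjoint (Set.Icc (a m) (b m)) (Set.Icc (a j) (b j)))
    (hcont : ∀ m, ContinuousOn g (Set.Icc (a m) (b m)))
    (hcover : ∀ m, (⋃ j, Set.Icc (a j) (b j)) ⊆ g '' Set.Icc (a m) (b m)) :
    ¬ Set.Countable
      {x : ℝ | ¬ ∃ L : ℝ, Filter.Tendsto (fun n => g^[n] x) Filter.atTop (nhds L)} := by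
  intro hcount
  classical
  set i0 : Fin k := ⟨0, by omega⟩ with hi0
  set i1 : Fin k := ⟨1, by omega⟩ with hi1
  have hi01 : i0 ≠ i1 := by simp [hi0, hi1, Fin.ext_iff]
  set idx : Bool → Fin k := fun bo => if bo then i1 else i0 with hidx
  have hidxne : ∀ bo bo', bo ≠ bo' → idx bo ≠ idx bo' := by
    intro bo bo' h heq
    apply h
    cases bo <;> cases bo' <;> simp [hidx] at heq ⊢
    · exact hi01 heq
    · exact hi01 heq.symm
  set t : (ℕ → Bool) → ℕ → Fin k := fun s n => idx (xor (s (n / 2)) (decide (n % 2 = 1))) with ht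
  have hts_even : ∀ s n, t s (2 * n) = idx (s n) := by
    intro s n
    have h1 : 2 * n / 2 = n := by omega
    have h2 : ¬ (2 * n % 2 = 1) := by omega
    simp [ht, h1, h2]
  have hts_odd : ∀ s n, t s (2 * n + 1) = idx (!(s n)) := by
    intro s n
    have h1 : (2 * n + 1) / 2 = n := by omega
    have h2 : (2 * n + 1) % 2 = 1 := by omega
    simp [ht, h1, h2, Bool.xor_true]
  -- choose points following each itinerary
  have hex := fun s : ℕ → Bool =>
    exists_itinerary g k a b hnondeg hcont hcover (t s)
  set F : (ℕ → Bool) → ℝ := fun s => (hex s).choose with hF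
  have hFspec : ∀ s n, g^[n] (F s) ∈ Set.Icc (a (t s n)) (b (t s n)) :=
    fun s => (hex s).choose_spec
  -- each F s is in the divergence set
  have hmem : ∀ s, ¬ ∃ L : ℝ, Tendsto (fun n => g^[n] (F s)) atTop (nhds L) := by
    rintro s ⟨L, hL⟩
    -- subsequences hitting I (idx bo) for each bo
    have key : ∀ bo : Bool, L ∈ Set.Icc (a (idx bo)) (b (idx bo)) := by
      intro bo
      set φ : ℕ → ℕ := fun n => if s n = bo then 2 * n else 2 * n + 1 with hφ
      have hφin : ∀ n, g^[φ n] (F s) ∈ Set.Icc (a (idx bo)) (b (idx bo)) := by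
        intro n
        by_cases h : s n = bo
        · have := hFspec s (2 * n)
          rw [hts_even] at this
          simpa [hφ, h] using this
        · have := hFspec s (2 * n + 1)
          rw [hts_odd] at this
          have hb : (!(s n)) = bo := by
            cases bo <;> cases hsn : s n <;> simp_all
          rw [hb] at this
          simpa [hφ, h] using this
      have hφtend : Tendsto φ atTop atTop := by
        apply tendsto_atTop_mono (f := fun n => n) _ tendsto_id
        intro n
        simp only [hφ]
        split <;> omega
      have htend : Tendsto (fun n => g^[φ n] (F s)) atTop (nhds L) := hL.comp hφtend
      exact isClosed_Icc.mem_of_tendsto htend (Filter.Eventually.of_forall hφin)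
    have h0 := key false
    have h1 := key true
    simp only [hidx] at h0 h1
    exact Set.disjoint_left.mp (hdisj i0 i1 hi01) (by simpa using h0) (by simpa using h1)
  -- F is injective
  have hinj : Function.Injective F := by
    intro s s' hss
    by_contra hne
    obtain ⟨n, hn⟩ : ∃ n, s n ≠ s' n := by
      by_contra h
      push_neg at h
      exact hne (funext h)
    have h1 := hFspec s (2 * n)
    have h2 := hFspec s' (2 * n)
    rw [hts_even] at h1 h2
    rw [hss] at h1
    exact Set.disjoint_left.mp (hdisj _ _ (hidxne _ _ hn)) h1 h2
  -- contradiction with uncountability of ℕ → Bool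
  have : Countable (ℕ → Bool) := by
    have hsub : ∀ s, F s ∈ {x : ℝ | ¬ ∃ L : ℝ, Tendsto (fun n => g^[n] x) atTop (nhds L)} :=
      fun s => hmem s
    have := hcount.to_subtype
    exact Function.Injective.countable (f := fun s => (⟨F s, hsub s⟩ :
      {x : ℝ | ¬ ∃ L : ℝ, Tendsto (fun n => g^[n] x) atTop (nhds L)}))
      (fun s s' h => hinj (congrArg Subtype.val h))
  -- Cantor
  have e : (ℕ → Bool) ≃ Set ℕ := Equiv.arrowCongr (Equiv.refl ℕ) Equiv.propEquivBool.symm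
  have : Countable (Set ℕ) := Countable.of_equiv _ e
  obtain ⟨f, hf⟩ := this.exists_injective_nat
  exact Function.cantor_injective f hf
end

section
/- Let f be a function in the Newton class and let c₁ < c₂ be two consecutive roots of f′ (i.e. f′(c₁) = f′(c₂) = 0 and f′(x) ≠ 0 for x ∈ (c₁, c₂)) such that f has exactly one root in the open interval (c₁, c₂). Then the one-sided limits of N_f at c₁ from the right and at c₂ from the left are infinite and of opposite signs: either lim_{x→c₁+} N_f(x) = +∞ and lim_{x→c₂−} N_f(x) = −∞, or lim_{x→c₁+} N_f(x) = −∞ and lim_{x→c₂−} N_f(x) = +∞. -/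
/-!
By Darboux's theorem `f'` has constant sign on `(c₁, c₂)`, so `f` is strictly monotone there and
`f · f' < 0` to the left of the root, `f · f' > 0` to the right of it. At `c₁` and `c₂` the
derivative vanishes while `f` does not (roots of `f` are simple), so `f' / f → 0` with the sign
of `f · f'`; hence `f / f' = (f' / f)⁻¹` tends to `-∞` at `c₁⁺` and to `+∞` at `c₂⁻`, and
`N_f` tends to `+∞` and `-∞` respectively.
-/

/-- `f` belongs to the Newton class: `f` is twice continuously differentiable,
roots of `f` are simple, and roots of `f'` are simple. -/
def NewtonClass (f : ℝ → ℝ) : Prop :=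
  ContDiff ℝ 2 f ∧ (∀ x, f x = 0 → deriv f x ≠ 0) ∧
    (∀ x, deriv f x = 0 → deriv (deriv f) x ≠ 0)

/-- The classical Newton approximation function `N_f(x) = x - f(x)/f'(x)`. -/
noncomputable def newtonFun (f : ℝ → ℝ) (x : ℝ) : ℝ :=
  x - f x / deriv f x

open Filter Set Topology

variable {f : ℝ → ℝ}

lemma deriv_neg_or_pos_of_ne_zero {s : Set ℝ} (hs : Convex ℝ s) (hf : Differentiable ℝ f)
    (hd : ∀ x ∈ s, deriv f x ≠ 0) : (∀ x ∈ s, deriv f x < 0) ∨ ∀ x ∈ s, 0 < deriv f x :=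
  hasDerivWithinAt_forall_lt_or_forall_gt_of_forall_ne hs
    (fun x _ => (hf x).hasDerivAt.hasDerivWithinAt) hd

section Root

variable {a b r x : ℝ}

lemma mul_deriv_neg_of_lt_root (hf : Differentiable ℝ f) (hd : ∀ x ∈ Ioo a b, deriv f x ≠ 0)
    (hr : r ∈ Ioo a b) (hfr : f r = 0) (hx : x ∈ Ioo a b) (hxr : x < r) :
    f x * deriv f x < 0 := by
  rcases deriv_neg_or_pos_of_ne_zero (convex_Ioo a b) hf hd with hneg | hpos
  · have hfx := strictAntiOn_of_deriv_neg (convex_Ioo a b) hf.continuous.continuousOn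
      (by simpa only [interior_Ioo]) hx hr hxr
    exact mul_neg_of_pos_of_neg (hfr ▸ hfx) (hneg x hx)
  · have hfx := strictMonoOn_of_deriv_pos (convex_Ioo a b) hf.continuous.continuousOn
      (by simpa only [interior_Ioo]) hx hr hxr
    exact mul_neg_of_neg_of_pos (hfr ▸ hfx) (hpos x hx)

lemma mul_deriv_pos_of_root_lt (hf : Differentiable ℝ f) (hd : ∀ x ∈ Ioo a b, deriv f x ≠ 0)
    (hr : r ∈ Ioo a b) (hfr : f r = 0) (hx : x ∈ Ioo a b) (hrx : r < x) :
    0 < f x * deriv f x := by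
  rcases deriv_neg_or_pos_of_ne_zero (convex_Ioo a b) hf hd with hneg | hpos
  · have hfx := strictAntiOn_of_deriv_neg (convex_Ioo a b) hf.continuous.continuousOn
      (by simpa only [interior_Ioo]) hr hx hrx
    exact mul_pos_of_neg_of_neg (hfr ▸ hfx) (hneg x hx)
  · have hfx := strictMonoOn_of_deriv_pos (convex_Ioo a b) hf.continuous.continuousOn
      (by simpa only [interior_Ioo]) hr hx hrx
    exact mul_pos (hfr ▸ hfx) (hpos x hx)

end Root

section Limits

variable {c : ℝ} {l : Filter ℝ}

lemma tendsto_deriv_div_self (hl : l ≤ 𝓝 c) (hf : ContinuousAt f c)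
    (hf' : ContinuousAt (deriv f) c) (hfc : f c ≠ 0) (hc : deriv f c = 0) :
    Tendsto (fun x => deriv f x / f x) l (𝓝 0) := by
  have hlim := (hf'.tendsto.div hf.tendsto hfc).mono_left hl
  rwa [hc, zero_div] at hlim

lemma tendsto_newtonFun_atTop (hl : l ≤ 𝓝 c) (hf : ContinuousAt f c)
    (hf' : ContinuousAt (deriv f) c) (hfc : f c ≠ 0) (hc : deriv f c = 0)
    (hsign : ∀ᶠ x in l, f x * deriv f x < 0) :
    Tendsto (newtonFun f) l atTop := by
  have hq : Tendsto (fun x => deriv f x / f x) l (𝓝[<] 0) :=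
    tendsto_nhdsWithin_iff.2 ⟨tendsto_deriv_div_self hl hf hf' hfc hc,
      hsign.mono fun x hx => by rw [mem_Iio, div_neg_iff]; rw [mul_neg_iff] at hx; tauto⟩
  have hinv := tendsto_neg_atBot_atTop.comp (tendsto_inv_nhdsLT_zero.comp hq)
  refine ((tendsto_id.mono_left hl).add_atTop hinv).congr fun x => ?_
  simp [newtonFun, sub_eq_add_neg]

lemma tendsto_newtonFun_atBot (hl : l ≤ 𝓝 c) (hf : ContinuousAt f c)
    (hf' : ContinuousAt (deriv f) c) (hfc : f c ≠ 0) (hc : deriv f c = 0)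
    (hsign : ∀ᶠ x in l, 0 < f x * deriv f x) :
    Tendsto (newtonFun f) l atBot := by
  have hq : Tendsto (fun x => deriv f x / f x) l (𝓝[>] 0) :=
    tendsto_nhdsWithin_iff.2 ⟨tendsto_deriv_div_self hl hf hf' hfc hc,
      hsign.mono fun x hx => by rw [mem_Ioi, div_pos_iff]; rw [mul_pos_iff] at hx; tauto⟩
  have hinv := tendsto_neg_atTop_atBot.comp (tendsto_inv_nhdsGT_zero.comp hq)
  refine ((tendsto_id.mono_left hl).add_atBot hinv).congr fun x => ?_
  simp [newtonFun, sub_eq_add_neg]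

end Limits

theorem newtonFun_onesided_limits_infinite_general
    (f : ℝ → ℝ) (hf : NewtonClass f)
    (c₁ c₂ : ℝ)
    (hc₁ : deriv f c₁ = 0) (hc₂ : deriv f c₂ = 0)
    (hconsec : ∀ x ∈ Set.Ioo c₁ c₂, deriv f x ≠ 0)
    (hroot : ∃! r, r ∈ Set.Ioo c₁ c₂ ∧ f r = 0) :
    (Filter.Tendsto (newtonFun f) (nhdsWithin c₁ (Set.Ioi c₁)) Filter.atTop ∧
       Filter.Tendsto (newtonFun f) (nhdsWithin c₂ (Set.Iio c₂)) Filter.atBot) ∨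
    (Filter.Tendsto (newtonFun f) (nhdsWithin c₁ (Set.Ioi c₁)) Filter.atBot ∧
       Filter.Tendsto (newtonFun f) (nhdsWithin c₂ (Set.Iio c₂)) Filter.atTop) := by
  obtain ⟨r, hr, hfr⟩ := hroot.exists
  have hdiff : Differentiable ℝ f := hf.1.differentiable (by norm_num)
  have hderiv_cont : Continuous (deriv f) := hf.1.continuous_deriv (by norm_num)
  have hsimple (c : ℝ) (hc : deriv f c = 0) : f c ≠ 0 := fun h => hf.2.1 c h hc
  left
  constructor
  · refine tendsto_newtonFun_atTop nhdsWithin_le_nhds hdiff.continuous.continuousAt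
      hderiv_cont.continuousAt (hsimple c₁ hc₁) hc₁ ?_
    filter_upwards [Ioo_mem_nhdsGT hr.1] with x hx
    exact mul_deriv_neg_of_lt_root hdiff hconsec hr hfr ⟨hx.1, hx.2.trans hr.2⟩ hx.2
  · refine tendsto_newtonFun_atBot nhdsWithin_le_nhds hdiff.continuous.continuousAt
      hderiv_cont.continuousAt (hsimple c₂ hc₂) hc₂ ?_
    filter_upwards [Ioo_mem_nhdsLT hr.2] with x hx
    exact mul_deriv_pos_of_root_lt hdiff hconsec hr hfr ⟨hr.1.trans hx.1, hx.2⟩ hx.1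

/-- If `c₁ < c₂` are consecutive roots of `f'` for a Newton-class function `f`,
and `f` has exactly one root in `(c₁, c₂)`, then the one-sided limits of `N_f`
at `c₁+` and `c₂−` are infinite with opposite signs. -/
theorem newtonFun_onesided_limits_infinite
    (f : ℝ → ℝ) (hf : NewtonClass f)
    (c₁ c₂ : ℝ) (hlt : c₁ < c₂)
    (hc₁ : deriv f c₁ = 0) (hc₂ : deriv f c₂ = 0)
    (hconsec : ∀ x ∈ Set.Ioo c₁ c₂, deriv f x ≠ 0)
    (hroot : ∃! r, r ∈ Set.Ioo c₁ c₂ ∧ f r = 0) :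
    (Filter.Tendsto (newtonFun f) (nhdsWithin c₁ (Set.Ioi c₁)) Filter.atTop ∧
       Filter.Tendsto (newtonFun f) (nhdsWithin c₂ (Set.Iio c₂)) Filter.atBot) ∨
    (Filter.Tendsto (newtonFun f) (nhdsWithin c₁ (Set.Ioi c₁)) Filter.atBot ∧
       Filter.Tendsto (newtonFun f) (nhdsWithin c₂ (Set.Iio c₂)) Filter.atTop) :=
  newtonFun_onesided_limits_infinite_general f hf c₁ c₂ hc₁ hc₂ hconsec hroot
end

section
/- Let f : ℝ → ℝ satisfy: (i) f belongs to the Newton class; (ii) the limits of f at +∞ and −∞ are infinite and of opposite signs (either f(x) → +∞ as x → +∞ and f(x) → −∞ as x → −∞, or vice versa); (iii) f has at least four real roots. Then the modified Newton approximation function M_f has periodic points of every prime period: for every n ∈ ℕ there exists a ∈ ℝ with M_fⁿ(a) = a and M_fᵐ(a) ≠ a for all 1 ≤ m < n. -/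
/-- The modified Newton approximation function
`M_f(x) = N_f(x) - f(N_f(x))/f'(x)`. -/
noncomputable def modNewtonFun (f : ℝ → ℝ) (x : ℝ) : ℝ :=
  newtonFun f x - f (newtonFun f x) / deriv f x

open Set Filter Topology

-- For `1 ≤ n` this says `Function.minimalPeriod g x = n`.
def HasPrimePeriod {α : Type*} (g : α → α) (n : ℕ) (x : α) : Prop :=
  g^[n] x = x ∧ ∀ m, 1 ≤ m → m < n → g^[m] x ≠ x

theorem IsPreconnected.pos_or_neg_of_ne_zero {X : Type*} [TopologicalSpace X] {s : Set X}
    (hs : IsPreconnected s) {f : X → ℝ} (hf : ContinuousOn f s) (h0 : ∀ x ∈ s, f x ≠ 0) :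
    (∀ x ∈ s, 0 < f x) ∨ ∀ x ∈ s, f x < 0 := by
  by_contra! ⟨⟨x, hx, hfx⟩, ⟨y, hy, hfy⟩⟩
  obtain ⟨z, hz, hfz⟩ := hs.intermediate_value hx hy hf ⟨hfx, hfy⟩
  exact h0 z hz hfz

theorem ContinuousOn.isCompact_inter_preimage {X Y : Type*} [TopologicalSpace X] [T2Space X]
    [TopologicalSpace Y] {f : X → Y} {s : Set X} {t : Set Y} (hf : ContinuousOn f s)
    (hs : IsCompact s) (ht : IsClosed t) : IsCompact (s ∩ f ⁻¹' t) :=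
  hs.of_isClosed_subset (hf.preimage_isClosed_of_isClosed hs.isClosed ht) inter_subset_left

section Dynamics

variable {g : ℝ → ℝ}

theorem ContinuousOn.exists_image_Icc_eq_of_le {α β : ℝ} (hg : ContinuousOn g (Icc α β))
    (hαβ : α ≤ β) (hgαβ : g α ≤ g β) :
    ∃ u v, α ≤ u ∧ v ≤ β ∧ g '' Icc u v = Icc (g α) (g β) := by
  have hlevel {a : ℝ} (ha : α ≤ a) (y : ℝ) : IsCompact (Icc a β ∩ g ⁻¹' {y}) :=
    (hg.mono (Icc_subset_Icc_left ha)).isCompact_inter_preimage isCompact_Icc isClosed_singleton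
  -- `u` is the last visit of the level `g α`, `v` the first visit of the level `g β` after `u`.
  obtain ⟨u, ⟨huI, hgu : g u = g α⟩, hu⟩ :=
    (hlevel le_rfl (g α)).exists_isGreatest ⟨α, ⟨le_rfl, hαβ⟩, rfl⟩
  obtain ⟨v, ⟨hvI, hgv : g v = g β⟩, hv⟩ :=
    (hlevel huI.1 (g β)).exists_isLeast ⟨β, ⟨huI.2, le_rfl⟩, rfl⟩
  have hg' : ContinuousOn g (Icc u v) := hg.mono (Icc_subset_Icc huI.1 hvI.2)
  refine ⟨u, v, huI.1, hvI.2, subset_antisymm ?_ ?_⟩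
  · rintro _ ⟨x, hx, rfl⟩
    constructor
    · by_contra! hlt
      obtain ⟨y, hy, hgy⟩ := intermediate_value_Icc hx.2 (hg'.mono (Icc_subset_Icc_left hx.1))
        ⟨hlt.le, hgv ▸ hgαβ⟩
      have hyu : y ≤ u := hu ⟨⟨huI.1.trans (hx.1.trans hy.1), hy.2.trans hvI.2⟩, hgy⟩
      rw [le_antisymm (hyu.trans hx.1) hy.1] at hgy
      exact hlt.ne hgy
    · by_contra! hlt
      obtain ⟨y, hy, hgy⟩ := intermediate_value_Icc hx.1 (hg'.mono (Icc_subset_Icc_right hx.2))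
        ⟨hgu ▸ hgαβ, hlt.le⟩
      have hvy : v ≤ y := hv ⟨⟨hy.1, hy.2.trans (hx.2.trans hvI.2)⟩, hgy⟩
      rw [le_antisymm hy.2 (hx.2.trans hvy)] at hgy
      exact hlt.ne' hgy
  · simpa [hgu, hgv] using intermediate_value_Icc hvI.1 hg'

theorem ContinuousOn.exists_image_Icc_eq {a b w z : ℝ} (hg : ContinuousOn g (Icc a b))
    (hsurj : SurjOn g (Icc a b) (Icc w z)) :
    ∃ u v, Icc u v ⊆ Icc a b ∧ g '' Icc u v = Icc w z := by
  rcases lt_or_ge z w with hzw | hwz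
  · exact ⟨w, z, by simp [Icc_eq_empty_of_lt hzw]⟩
  obtain ⟨α, hα, rfl⟩ := hsurj (left_mem_Icc.2 hwz)
  obtain ⟨β, hβ, rfl⟩ := hsurj (right_mem_Icc.2 hwz)
  rcases le_total α β with hαβ | hβα
  · obtain ⟨u, v, hu, hv, himage⟩ :=
      (hg.mono (Icc_subset_Icc hα.1 hβ.2)).exists_image_Icc_eq_of_le hαβ hwz
    exact ⟨u, v, Icc_subset_Icc (hα.1.trans hu) (hv.trans hβ.2), himage⟩
  · -- reflect the domain so that the preimage of `w` lies to the left of that of `z`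
    have hg' : ContinuousOn (g ∘ Neg.neg) (Icc (-α) (-β)) :=
      hg.comp continuousOn_neg fun x hx => ⟨by linarith [hx.2, hβ.1], by linarith [hx.1, hα.2]⟩
    obtain ⟨u, v, hu, hv, himage⟩ :=
      hg'.exists_image_Icc_eq_of_le (neg_le_neg hβα) (by simpa using hwz)
    refine ⟨-v, -u, Icc_subset_Icc (by linarith [hβ.1]) (by linarith [hα.2]), ?_⟩
    rw [← image_neg_Icc, ← image_comp, himage]
    simp

theorem exists_Icc_itinerary (a b : ℕ → ℝ) (n : ℕ)
    (hg : ∀ j < n, ContinuousOn g (Icc (a j) (b j)))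
    (hsurj : ∀ j < n, SurjOn g (Icc (a j) (b j)) (Icc (a (j + 1)) (b (j + 1)))) :
    ∃ u v, (∀ j ≤ n, MapsTo g^[j] (Icc u v) (Icc (a j) (b j))) ∧
      ContinuousOn g^[n] (Icc u v) ∧ g^[n] '' Icc u v = Icc (a n) (b n) := by
  induction n generalizing a b with
  | zero =>
    refine ⟨a 0, b 0, fun j hj => ?_, continuousOn_id, image_id _⟩
    obtain rfl := Nat.le_zero.1 hj
    exact mapsTo_id _
  | succ n ih =>
    obtain ⟨u', v', hmaps', hcont', himage'⟩ := ih (fun j => a (j + 1)) (fun j => b (j + 1))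
      (fun j hj => hg (j + 1) (by omega)) (fun j hj => hsurj (j + 1) (by omega))
    obtain ⟨u, v, hsub, himage⟩ := (hg 0 n.succ_pos).exists_image_Icc_eq
      ((hsurj 0 n.succ_pos).mono subset_rfl (hmaps' 0 n.zero_le))
    have hmaps : MapsTo g (Icc u v) (Icc u' v') := himage ▸ mapsTo_image g _
    refine ⟨u, v, fun j hj => ?_, ?_, ?_⟩
    · cases j with
      | zero => exact hsub
      | succ j => exact (hmaps' j (by omega)).comp hmaps
    · exact hcont'.comp ((hg 0 n.succ_pos).mono hsub) hmaps
    · rw [Function.iterate_succ, image_comp, himage, himage']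

theorem exists_hasPrimePeriod_of_horseshoe {p q r s : ℝ} (hpq : p ≤ q) (hqr : q < r) (hrs : r ≤ s)
    (hI : ContinuousOn g (Icc p q)) (hJ : ContinuousOn g (Icc r s))
    (hIsurj : SurjOn g (Icc p q) (Icc p s)) (hJsurj : SurjOn g (Icc r s) (Icc p q))
    {n : ℕ} (hn : 2 ≤ n) :
    ∃ x, HasPrimePeriod g n x := by
  -- the itinerary `J, I, …, I, J`
  let a : ℕ → ℝ := fun j => if j = 0 ∨ j = n then r else p
  let b : ℕ → ℝ := fun j => if j = 0 ∨ j = n then s else q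
  have hJ_sub : Icc r s ⊆ Icc p s := Icc_subset_Icc_left (by linarith)
  have hI_sub : Icc p q ⊆ Icc p s := Icc_subset_Icc_right (by linarith)
  obtain ⟨u, v, hmaps, hcont, himage⟩ := exists_Icc_itinerary (g := g) a b n
    (fun j _ => by
      by_cases h : j = 0 ∨ j = n <;> simp only [a, b, h, if_true, if_false] <;> assumption)
    (fun j hj => by
      by_cases h0 : j = 0
      · subst h0
        simpa [a, b, show n ≠ 1 by omega, eq_comm] using hJsurj
      · by_cases hn' : j + 1 = n
        · simpa [a, b, h0, hn', show j ≠ n by omega] using hIsurj.mono subset_rfl hJ_sub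
        · simpa [a, b, h0, hn', show j ≠ n by omega] using hIsurj.mono subset_rfl hI_sub)
  have hKJ : Icc u v ⊆ Icc r s := fun y hy => by simpa [a, b] using hmaps 0 n.zero_le hy
  have hKJ_image : g^[n] '' Icc u v = Icc r s := by simpa [a, b] using himage
  have huv : u ≤ v := nonempty_Icc.1 (image_nonempty.1 (hKJ_image ▸ nonempty_Icc.2 hrs))
  obtain ⟨x, hx, hfix⟩ :=
    exists_mem_Icc_isFixedPt_of_surjOn hcont huv fun y hy => hKJ_image ▸ hKJ hy
  refine ⟨x, hfix, fun m hm hmn hmx => ?_⟩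
  have hmI : g^[m] x ∈ Icc p q := by
    simpa [a, b, show m ≠ 0 by omega, hmn.ne] using hmaps m hmn.le hx
  linarith [hmI.2, (hKJ hx).1]

end Dynamics

section Roots

variable {f : ℝ → ℝ}

theorem exists_next_root {a w : ℝ} (hf : ContinuousOn f (Icc a w)) (ha : deriv f a ≠ 0)
    (hw : f w = 0) (haw : a < w) :
    ∃ b ∈ Ioc a w, f b = 0 ∧ ∀ x ∈ Ioo a b, f x ≠ 0 := by
  have hiso : ∀ᶠ x in 𝓝[>] a, f x ≠ 0 :=
    nhdsWithin_mono _ (fun x hx => ne_of_gt hx)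
      ((differentiableAt_of_deriv_ne_zero ha).hasDerivAt.eventually_ne ha)
  obtain ⟨t, hat, ht⟩ := mem_nhdsGT_iff_exists_Ioc_subset.1 (hiso.and (Ioo_mem_nhdsGT haw))
  have htw : t < w := (ht ⟨hat, le_rfl⟩).2.2
  have hZ : IsCompact (Icc t w ∩ f ⁻¹' {0}) :=
    (hf.mono (Icc_subset_Icc_left hat.le)).isCompact_inter_preimage isCompact_Icc isClosed_singleton
  obtain ⟨b, ⟨hbI, hb : f b = 0⟩, hbmin⟩ := hZ.exists_isLeast ⟨w, ⟨htw.le, le_rfl⟩, hw⟩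
  refine ⟨b, ⟨lt_of_lt_of_le hat hbI.1, hbI.2⟩, hb, fun x hx hfx => ?_⟩
  rcases le_or_gt x t with hxt | htx
  · exact (ht ⟨hx.1, hxt⟩).1 hfx
  · exact (hbmin ⟨⟨htx.le, hx.2.le.trans hbI.2⟩, hfx⟩).not_gt hx.2

theorem neg_of_pos_of_deriv_ne_zero {a b c : ℝ} (hf : ContinuousOn f (Ioo b c)) (hab : a < b)
    (hbc : b < c) (hb : f b = 0) (hb' : deriv f b ≠ 0) (hpos : ∀ x ∈ Ioo a b, 0 < f x)
    (hne : ∀ x ∈ Ioo b c, f x ≠ 0) :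
    ∀ x ∈ Ioo b c, f x < 0 := by
  refine (isPreconnected_Ioo.pos_or_neg_of_ne_zero hf hne).resolve_left fun hpos' => hb' ?_
  refine IsLocalMin.deriv_eq_zero (mem_of_superset (Ioo_mem_nhds hab hbc) fun x hx => ?_)
  show f b ≤ f x
  rcases lt_trichotomy x b with hxb | rfl | hbx
  · exact hb ▸ (hpos x ⟨hx.1, hxb⟩).le
  · exact le_rfl
  · exact hb ▸ (hpos' x ⟨hbx, hx.2⟩).le

theorem pos_of_neg_of_deriv_ne_zero {a b c : ℝ} (hf : ContinuousOn f (Ioo b c)) (hab : a < b)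
    (hbc : b < c) (hb : f b = 0) (hb' : deriv f b ≠ 0) (hneg : ∀ x ∈ Ioo a b, f x < 0)
    (hne : ∀ x ∈ Ioo b c, f x ≠ 0) :
    ∀ x ∈ Ioo b c, 0 < f x := by
  simpa using neg_of_pos_of_deriv_ne_zero (f := -f) hf.neg hab hbc (by simp [hb])
    (by simpa [deriv.neg'] using hb') (by simpa using hneg) (by simpa using hne)

theorem exists_roots_pos_neg_of_four_roots (hf : Continuous f)
    (hsimple : ∀ x, f x = 0 → deriv f x ≠ 0) {r₁ r₂ r₃ r₄ : ℝ} (h₁₂ : r₁ < r₂) (h₂₃ : r₂ < r₃)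
    (h₃₄ : r₃ < r₄) (hr₁ : f r₁ = 0) (hr₂ : f r₂ = 0) (hr₃ : f r₃ = 0) (hr₄ : f r₄ = 0) :
    ∃ A B C, A < B ∧ B < C ∧ f A = 0 ∧ f B = 0 ∧ f C = 0 ∧
      (∀ x ∈ Ioo A B, 0 < f x) ∧ ∀ x ∈ Ioo B C, f x < 0 := by
  obtain ⟨b₁, hb₁, hfb₁, hgap₁⟩ :=
    exists_next_root hf.continuousOn (hsimple _ hr₁) hr₂ h₁₂
  obtain ⟨b₂, hb₂, hfb₂, hgap₂⟩ :=
    exists_next_root hf.continuousOn (hsimple _ hfb₁) hr₃ (hb₁.2.trans_lt h₂₃)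
  obtain ⟨b₃, hb₃, hfb₃, hgap₃⟩ :=
    exists_next_root hf.continuousOn (hsimple _ hfb₂) hr₄ (hb₂.2.trans_lt h₃₄)
  rcases isPreconnected_Ioo.pos_or_neg_of_ne_zero hf.continuousOn hgap₁ with hpos₁ | hneg₁
  · exact ⟨r₁, b₁, b₂, hb₁.1, hb₂.1, hr₁, hfb₁, hfb₂, hpos₁,
      neg_of_pos_of_deriv_ne_zero hf.continuousOn hb₁.1 hb₂.1 hfb₁ (hsimple _ hfb₁) hpos₁ hgap₂⟩
  · have hpos₂ :=
      pos_of_neg_of_deriv_ne_zero hf.continuousOn hb₁.1 hb₂.1 hfb₁ (hsimple _ hfb₁) hneg₁ hgap₂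
    exact ⟨b₁, b₂, b₃, hb₂.1, hb₃.1, hfb₁, hfb₂, hfb₃, hpos₂,
      neg_of_pos_of_deriv_ne_zero hf.continuousOn hb₂.1 hb₃.1 hfb₂ (hsimple _ hfb₂) hpos₂ hgap₃⟩

theorem exists_first_critical_point {A B : ℝ} (hf : ContinuousOn f (Icc A B))
    (hf' : ContinuousOn (deriv f) (Icc A B)) (hAB : A < B) (hA : f A = 0) (hB : f B = 0)
    (hA' : deriv f A ≠ 0) (hpos : ∀ x ∈ Ioo A B, 0 < f x) :
    ∃ c ∈ Ioo A B, deriv f c = 0 ∧ ∀ x ∈ Ico A c, 0 < deriv f x := by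
  obtain ⟨c₀, hc₀, hc₀'⟩ := exists_deriv_eq_zero hAB hf (hA.trans hB.symm)
  have hZ : IsCompact (Icc A B ∩ deriv f ⁻¹' {0}) :=
    hf'.isCompact_inter_preimage isCompact_Icc isClosed_singleton
  obtain ⟨c, ⟨hcI, hc : deriv f c = 0⟩, hcmin⟩ :=
    hZ.exists_isLeast ⟨c₀, Ioo_subset_Icc_self hc₀, hc₀'⟩
  have hAc : A < c := hcI.1.lt_of_ne (by rintro rfl; exact hA' hc)
  have hcB : c < B := (hcmin ⟨Ioo_subset_Icc_self hc₀, hc₀'⟩).trans_lt hc₀.2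
  have hIco : Ico A c ⊆ Icc A B := fun x hx => ⟨hx.1, hx.2.le.trans hcI.2⟩
  have hne : ∀ x ∈ Ico A c, deriv f x ≠ 0 :=
    fun x hx hx0 => (hcmin ⟨hIco hx, hx0⟩).not_gt hx.2
  refine ⟨c, ⟨hAc, hcB⟩, hc, ?_⟩
  refine (isPreconnected_Ico.pos_or_neg_of_ne_zero (hf'.mono hIco) hne).resolve_right
    fun hneg => ?_
  -- `f` would decrease from `f A = 0` to `f c > 0`
  have hanti : StrictAntiOn f (Icc A c) :=
    strictAntiOn_of_deriv_neg (convex_Icc A c) (hf.mono (Icc_subset_Icc_right hcB.le))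
      fun x hx => hneg x (Ioo_subset_Ico_self (by simpa using hx))
  have := hanti (left_mem_Icc.2 hAc.le) (right_mem_Icc.2 hAc.le) hAc
  linarith [hpos c ⟨hAc, hcB⟩]

end Roots

section ModNewton

variable {f : ℝ → ℝ}

theorem modNewtonFun_eq_self_of_root {r : ℝ} (hr : f r = 0) : modNewtonFun f r = r := by
  simp [modNewtonFun, newtonFun, hr]

theorem modNewtonFun_neg (f : ℝ → ℝ) : modNewtonFun (-f) = modNewtonFun f := by
  ext x
  simp [modNewtonFun, newtonFun, deriv.neg', neg_div_neg_eq]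

theorem modNewtonFun_eq_sub (f : ℝ → ℝ) (x : ℝ) :
    modNewtonFun f x = x - (f x + f (newtonFun f x)) * (deriv f x)⁻¹ := by
  rw [modNewtonFun]
  nth_rw 1 [newtonFun]
  ring

theorem continuousOn_modNewtonFun {s : Set ℝ} (hf : Continuous f)
    (hf' : ContinuousOn (deriv f) s) (h : ∀ x ∈ s, deriv f x ≠ 0) :
    ContinuousOn (modNewtonFun f) s := by
  have hN : ContinuousOn (newtonFun f) s := continuousOn_id.sub (hf.continuousOn.div hf' h)
  exact hN.sub ((hf.comp_continuousOn hN).div hf' h)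

theorem tendsto_add_comp_newtonFun_atBot {c : ℝ} (hf : ContinuousAt f c)
    (hbot : Tendsto f atBot atBot)
    (hratio : Tendsto (fun x => f x * (deriv f x)⁻¹) (𝓝[<] c) atTop) :
    Tendsto (fun x => f x + f (newtonFun f x)) (𝓝[<] c) atBot := by
  have hN : Tendsto (newtonFun f) (𝓝[<] c) atBot := by
    refine ((tendsto_id.mono_left nhdsWithin_le_nhds).add_atBot
      (tendsto_neg_atTop_atBot.comp hratio)).congr fun x => ?_
    simp [newtonFun, sub_eq_add_neg, div_eq_mul_inv]
  exact (hf.tendsto.mono_left nhdsWithin_le_nhds).add_atBot (hbot.comp hN)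

theorem tendsto_modNewtonFun_nhdsLT_atTop {c : ℝ} (hf : ContinuousAt f c)
    (hf' : ContinuousAt (deriv f) c) (hbot : Tendsto f atBot atBot) (hc : deriv f c = 0)
    (hfc : 0 < f c) (hpos : ∀ᶠ x in 𝓝[<] c, 0 < deriv f x) :
    Tendsto (modNewtonFun f) (𝓝[<] c) atTop := by
  have hinv : Tendsto (fun x => (deriv f x)⁻¹) (𝓝[<] c) atTop :=
    tendsto_inv_nhdsGT_zero.comp
      (tendsto_nhdsWithin_iff.2 ⟨hc ▸ hf'.tendsto.mono_left nhdsWithin_le_nhds, hpos⟩)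
  have hsum := tendsto_add_comp_newtonFun_atBot hf hbot
    ((hf.tendsto.mono_left nhdsWithin_le_nhds).pos_mul_atTop hfc hinv)
  refine ((tendsto_id.mono_left nhdsWithin_le_nhds).add_atTop
    (tendsto_neg_atBot_atTop.comp (hsum.atBot_mul_atTop₀ hinv))).congr fun x => ?_
  simp [modNewtonFun_eq_sub, sub_eq_add_neg]

theorem tendsto_modNewtonFun_nhdsLT_atBot {c : ℝ} (hf : ContinuousAt f c)
    (hf' : ContinuousAt (deriv f) c) (hbot : Tendsto f atBot atBot) (hc : deriv f c = 0)
    (hfc : f c < 0) (hneg : ∀ᶠ x in 𝓝[<] c, deriv f x < 0) :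
    Tendsto (modNewtonFun f) (𝓝[<] c) atBot := by
  have hinv : Tendsto (fun x => (deriv f x)⁻¹) (𝓝[<] c) atBot :=
    tendsto_inv_nhdsLT_zero.comp
      (tendsto_nhdsWithin_iff.2 ⟨hc ▸ hf'.tendsto.mono_left nhdsWithin_le_nhds, hneg⟩)
  have hsum := tendsto_add_comp_newtonFun_atBot hf hbot
    ((hf.tendsto.mono_left nhdsWithin_le_nhds).neg_mul_atBot hfc hinv)
  refine ((tendsto_id.mono_left nhdsWithin_le_nhds).add_atBot
    (tendsto_neg_atTop_atBot.comp (hsum.atBot_mul_atBot₀ hinv))).congr fun x => ?_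
  simp [modNewtonFun_eq_sub, sub_eq_add_neg]

theorem exists_hasPrimePeriod_modNewtonFun_of_roots (hf : ContDiff ℝ 1 f)
    (hbot : Tendsto f atBot atBot) {A B C : ℝ} (hAB : A < B) (hBC : B < C) (hA : f A = 0)
    (hB : f B = 0) (hC : f C = 0) (hA' : deriv f A ≠ 0) (hB' : deriv f B ≠ 0)
    (hpos : ∀ x ∈ Ioo A B, 0 < f x) (hneg : ∀ x ∈ Ioo B C, f x < 0) {n : ℕ} (hn : 2 ≤ n) :
    ∃ x, HasPrimePeriod (modNewtonFun f) n x := by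
  have hfc := hf.continuous
  have hf'c := hf.continuous_deriv le_rfl
  obtain ⟨c₁, hc₁, hc₁0, hderiv₁⟩ :=
    exists_first_critical_point hfc.continuousOn hf'c.continuousOn hAB hA hB hA' hpos
  obtain ⟨c₂, hc₂, hc₂0, hderiv₂⟩ := exists_first_critical_point (f := -f)
    hfc.neg.continuousOn (by rw [deriv.neg']; exact hf'c.neg.continuousOn) hBC
    (by simp [hB]) (by simp [hC]) (by simpa [deriv.neg'] using hB') (by simpa using hneg)
  simp only [deriv.neg', neg_eq_zero, Left.neg_pos_iff] at hc₂0 hderiv₂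
  have hMtop := tendsto_modNewtonFun_nhdsLT_atTop hfc.continuousAt hf'c.continuousAt hbot hc₁0
    (hpos c₁ hc₁) (mem_of_superset (Ioo_mem_nhdsLT hc₁.1) fun x hx => hderiv₁ x ⟨hx.1.le, hx.2⟩)
  have hMbot := tendsto_modNewtonFun_nhdsLT_atBot hfc.continuousAt hf'c.continuousAt hbot hc₂0
    (hneg c₂ hc₂) (mem_of_superset (Ioo_mem_nhdsLT hc₂.1) fun x hx => hderiv₂ x ⟨hx.1.le, hx.2⟩)
  obtain ⟨d₂, hMd₂, hd₂⟩ :=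
    ((hMbot.eventually (eventually_le_atBot A)).and (Ioo_mem_nhdsLT hc₂.1)).exists
  obtain ⟨d₁, hMd₁, hd₁⟩ :=
    ((hMtop.eventually (eventually_ge_atTop d₂)).and (Ioo_mem_nhdsLT hc₁.1)).exists
  have hI : ContinuousOn (modNewtonFun f) (Icc A d₁) := continuousOn_modNewtonFun hfc
    hf'c.continuousOn fun x hx => (hderiv₁ x ⟨hx.1, hx.2.trans_lt hd₁.2⟩).ne'
  have hJ : ContinuousOn (modNewtonFun f) (Icc B d₂) := continuousOn_modNewtonFun hfc
    hf'c.continuousOn fun x hx => (hderiv₂ x ⟨hx.1, hx.2.trans_lt hd₂.2⟩).ne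
  have hd₁B : d₁ < B := hd₁.2.trans hc₁.2
  refine exists_hasPrimePeriod_of_horseshoe hd₁.1.le hd₁B hd₂.1.le hI hJ ?_ ?_ hn
  · have := intermediate_value_Icc hd₁.1.le hI
    rw [modNewtonFun_eq_self_of_root hA] at this
    exact (Icc_subset_Icc_right hMd₁).trans this
  · have := intermediate_value_Icc' hd₂.1.le hJ
    rw [modNewtonFun_eq_self_of_root hB] at this
    exact (Icc_subset_Icc hMd₂ hd₁B.le).trans this

theorem exists_hasPrimePeriod_modNewtonFun_of_four_roots (hf : ContDiff ℝ 1 f)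
    (hsimple : ∀ x, f x = 0 → deriv f x ≠ 0) (hbot : Tendsto f atBot atBot)
    {r₁ r₂ r₃ r₄ : ℝ} (h₁₂ : r₁ < r₂) (h₂₃ : r₂ < r₃) (h₃₄ : r₃ < r₄) (hr₁ : f r₁ = 0)
    (hr₂ : f r₂ = 0) (hr₃ : f r₃ = 0) (hr₄ : f r₄ = 0) {n : ℕ} (hn : 2 ≤ n) :
    ∃ x, HasPrimePeriod (modNewtonFun f) n x := by
  obtain ⟨A, B, C, hAB, hBC, hA, hB, hC, hpos, hneg⟩ :=
    exists_roots_pos_neg_of_four_roots hf.continuous hsimple h₁₂ h₂₃ h₃₄ hr₁ hr₂ hr₃ hr₄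
  exact exists_hasPrimePeriod_modNewtonFun_of_roots hf hbot hAB hBC hA hB hC (hsimple A hA)
    (hsimple B hB) hpos hneg hn

end ModNewton

/-- If `f` is a Newton-class function, has infinite limits of opposite signs
at `±∞`, and has at least four real roots, then `M_f` has periodic points of
every prime period. -/
theorem modNewtonFun_periodic_points_of_every_prime_period
    (f : ℝ → ℝ)
    (hf : NewtonClass f)
    (hlim : (Filter.Tendsto f Filter.atTop Filter.atTop ∧
              Filter.Tendsto f Filter.atBot Filter.atBot) ∨
            (Filter.Tendsto f Filter.atTop Filter.atBot ∧
              Filter.Tendsto f Filter.atBot Filter.atTop))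
    (hroots : ∃ r₁ r₂ r₃ r₄ : ℝ, r₁ < r₂ ∧ r₂ < r₃ ∧ r₃ < r₄ ∧
      f r₁ = 0 ∧ f r₂ = 0 ∧ f r₃ = 0 ∧ f r₄ = 0) :
    ∀ n : ℕ, 1 ≤ n → ∃ a : ℝ, (modNewtonFun f)^[n] a = a ∧
      ∀ m : ℕ, 1 ≤ m → m < n → (modNewtonFun f)^[m] a ≠ a := by
  obtain ⟨hf2, hsimple, -⟩ := hf
  have hf1 : ContDiff ℝ 1 f := hf2.of_le (by norm_num)
  obtain ⟨r₁, r₂, r₃, r₄, h₁₂, h₂₃, h₃₄, hr₁, hr₂, hr₃, hr₄⟩ := hroots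
  intro n hn
  obtain rfl | hn := hn.eq_or_lt
  · exact ⟨r₁, modNewtonFun_eq_self_of_root hr₁, fun m hm hm' => absurd hm' (by omega)⟩
  rcases hlim with ⟨-, hbot⟩ | ⟨-, htop⟩
  · exact exists_hasPrimePeriod_modNewtonFun_of_four_roots hf1 hsimple hbot h₁₂ h₂₃ h₃₄ hr₁ hr₂
      hr₃ hr₄ hn
  · rw [← modNewtonFun_neg]
    exact exists_hasPrimePeriod_modNewtonFun_of_four_roots hf1.neg
      (fun x hx => by simpa [deriv.neg'] using hsimple x (by simpa using hx))
      (tendsto_neg_atTop_atBot.comp htop) h₁₂ h₂₃ h₃₄ (by simp [hr₁]) (by simp [hr₂])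
      (by simp [hr₃]) (by simp [hr₄]) hn
end

section
/- (Scaling Theorem) Let f be a differentiable function on ℝ and let T(x) = a·x + b be an affine map with a ≠ 0. Then for every x ∈ ℝ with f′(x) ≠ 0, one has T(M_{f∘T}(T⁻¹(x))) = M_f(x). -/
/-!
The chain rule for an affine change of variables holds for `deriv` without any
differentiability assumption (both sides are `0` where `f` is not differentiable), so
`(f ∘ T)' = a · (f' ∘ T)`. The factor `a` produced by the derivative in each Newton
correction `f/f'` is exactly the one that `T` multiplies back in, whence `T ∘ N_{f∘T} = N_f ∘ T`
and likewise for `M`; with `x / 0 = 0` this survives even where `f' = 0`.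
-/

theorem deriv_comp_affine {𝕜 E : Type*} [NontriviallyNormedField 𝕜] [NormedAddCommGroup E]
    [NormedSpace 𝕜 E] (f : 𝕜 → E) (a b y : 𝕜) :
    deriv (fun y => f (a * y + b)) y = a • deriv f (a * y + b) :=
  (deriv_comp_mul_left a (fun z => f (z + b)) y).trans (by rw [deriv_comp_add_const])

section Affine

variable (f : ℝ → ℝ) {a : ℝ} (b : ℝ) (y : ℝ)

theorem mul_div_deriv_comp_affine (ha : a ≠ 0) (c : ℝ) :
    a * (c / deriv (fun y => f (a * y + b)) y) = c / deriv f (a * y + b) := by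
  rw [deriv_comp_affine, smul_eq_mul, mul_div_assoc', mul_div_mul_left _ _ ha]

theorem newtonFun_comp_affine (ha : a ≠ 0) :
    a * newtonFun (fun y => f (a * y + b)) y + b = newtonFun f (a * y + b) := by
  rw [newtonFun, newtonFun, mul_sub, mul_div_deriv_comp_affine f b y ha]
  ring

theorem modNewtonFun_comp_affine (ha : a ≠ 0) :
    a * modNewtonFun (fun y => f (a * y + b)) y + b = modNewtonFun f (a * y + b) := by
  rw [modNewtonFun, modNewtonFun, mul_sub, mul_div_deriv_comp_affine f b y ha,
    ← newtonFun_comp_affine f b y ha]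
  ring

end Affine

theorem modNewtonFun_scaling_general
    (f : ℝ → ℝ)
    (a b : ℝ) (ha : a ≠ 0)
    (x : ℝ) :
    a * modNewtonFun (fun y => f (a * y + b)) ((x - b) / a) + b =
      modNewtonFun f x := by
  rw [modNewtonFun_comp_affine f b _ ha, mul_div_cancel₀ _ ha, sub_add_cancel]

/-- **Scaling Theorem.** If `f` is differentiable on `ℝ` and `T(x) = a·x + b`
with `a ≠ 0`, then `T ∘ M_{f∘T} ∘ T⁻¹ = M_f` at every point where `f' ≠ 0`. -/
theorem modNewtonFun_scaling
    (f : ℝ → ℝ) (hf : Differentiable ℝ f)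
    (a b : ℝ) (ha : a ≠ 0)
    (x : ℝ) (hx : deriv f x ≠ 0) :
    a * modNewtonFun (fun y => f (a * y + b)) ((x - b) / a) + b =
      modNewtonFun f x :=
  modNewtonFun_scaling_general f a b ha x
end

section
/- Let λ > 0 be a real damping parameter and let f : ℝ → ℝ satisfy: (i) f belongs to the Newton class; (ii) the limits of f at +∞ and −∞ are infinite and of opposite signs; (iii) f has at least four real roots. Then the damped modified Newton approximation function M_{λ,f} has periodic points of every prime period: for every n ∈ ℕ there exists a ∈ ℝ with M_{λ,f}ⁿ(a) = a and M_{λ,f}ᵐ(a) ≠ a for all 1 ≤ m < n. -/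
/-- The damped Newton approximation function `N_{λ,f}(x) = x - λ·f(x)/f'(x)`. -/
noncomputable def dampedNewtonFun (lam : ℝ) (f : ℝ → ℝ) (x : ℝ) : ℝ :=
  x - lam * (f x / deriv f x)

/-- The damped modified Newton approximation function
`M_{λ,f}(x) = N_{λ,f}(x) - λ·f(N_{λ,f}(x))/f'(x)`. -/
noncomputable def dampedModNewtonFun (lam : ℝ) (f : ℝ → ℝ) (x : ℝ) : ℝ :=
  dampedNewtonFun lam f x - lam * (f (dampedNewtonFun lam f x) / deriv f x)

/-!
Replacing `f` by `-f` does not change `M = M_{λ,f}`, so we may assume `f → ±∞` at `±∞`.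
Among the four roots there are two, `a < d`, at which `f` crosses zero upwards; between them
lies a critical point `c`. Let `c₁` be the first critical point after `a`: `f' > 0` on `[a, c₁)`
and `f (c₁) > 0`, so as `x → c₁⁻` the Newton step `N x` escapes to `-∞`, `f (N x) → -∞`, and
`M x → +∞`. Symmetrically (conjugating by `x ↦ -x`) `M x → -∞` as `x` decreases to the last
critical point before `d`. Hence there are `a < u < c < v < d` with `M` continuous on
`A = [a, u]` and `B = [v, d]`, `M u ≥ d` and `M v ≤ a`. As `M` fixes the roots `a` and `d`,
both `M(A)` and `M(B)` contain `[a, d] ⊇ A ∪ B`: a horseshoe. Pulling `A` back along the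
itinerary `A B ⋯ B A` yields a subinterval `J ⊆ A` with `Mⁿ(J) = A`, hence a fixed point of
`Mⁿ` in `J` whose orbit lies in `B` at the times `1, …, n - 1`, so its prime period is `n`.
-/

open Set Filter Topology

section IntervalMaps

variable {g : ℝ → ℝ} {x y c : ℝ}

theorem exists_mem_Icc_eq_and_forall_Ioc_lt (hxy : x ≤ y) (hg : ContinuousOn g (Icc x y))
    (hx : g x ≤ c) (hy : c ≤ g y) :
    ∃ s ∈ Icc x y, g s = c ∧ ∀ z ∈ Ioc s y, c < g z := by
  have hK : IsCompact (Icc x y ∩ g ⁻¹' {c}) := isCompact_Icc.of_isClosed_subset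
    (hg.preimage_isClosed_of_isClosed isClosed_Icc isClosed_singleton) inter_subset_left
  obtain ⟨s, ⟨hs, hgs⟩, hmax⟩ := hK.exists_isGreatest (intermediate_value_Icc hxy hg ⟨hx, hy⟩)
  refine ⟨s, hs, hgs, fun z hz => not_le.1 fun hgz => ?_⟩
  obtain ⟨w, hw, hgw⟩ := intermediate_value_Icc hz.2 (hg.mono (Icc_subset_Icc_left
    (hs.1.trans hz.1.le))) ⟨hgz, hy⟩
  exact (hz.1.trans_le hw.1).not_ge (hmax ⟨⟨hs.1.trans (hz.1.le.trans hw.1), hw.2⟩, hgw⟩)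

theorem exists_mem_Icc_eq_and_forall_Ico_lt (hxy : x ≤ y) (hg : ContinuousOn g (Icc x y))
    (hx : g x ≤ c) (hy : c ≤ g y) :
    ∃ t ∈ Icc x y, g t = c ∧ ∀ z ∈ Ico x t, g z < c := by
  have hK : IsCompact (Icc x y ∩ g ⁻¹' {c}) := isCompact_Icc.of_isClosed_subset
    (hg.preimage_isClosed_of_isClosed isClosed_Icc isClosed_singleton) inter_subset_left
  obtain ⟨t, ⟨ht, hgt⟩, hmin⟩ := hK.exists_isLeast (intermediate_value_Icc hxy hg ⟨hx, hy⟩)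
  refine ⟨t, ht, hgt, fun z hz => not_le.1 fun hgz => ?_⟩
  obtain ⟨w, hw, hgw⟩ := intermediate_value_Icc hz.1 (hg.mono (Icc_subset_Icc_right
    (hz.2.le.trans ht.2))) ⟨hx, hgz⟩
  exact (hw.2.trans_lt hz.2).not_ge (hmin ⟨⟨hw.1, hw.2.trans (hz.2.le.trans ht.2)⟩, hgw⟩)

theorem exists_Icc_subset_image_eq_Icc {p q s t : ℝ} (hpq : p ≤ q) (hg : ContinuousOn g (Icc p q))
    (hs : g p ≤ s) (hst : s ≤ t) (ht : t ≤ g q) :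
    ∃ s' t', s' ≤ t' ∧ Icc s' t' ⊆ Icc p q ∧ g '' Icc s' t' = Icc s t := by
  obtain ⟨s', hs', hgs', hgt_s⟩ := exists_mem_Icc_eq_and_forall_Ioc_lt hpq hg hs (hst.trans ht)
  obtain ⟨t', ht', hgt', hlt_t⟩ := exists_mem_Icc_eq_and_forall_Ico_lt hs'.2
    (hg.mono (Icc_subset_Icc_left hs'.1)) (hgs' ▸ hst) ht
  have hsub : Icc s' t' ⊆ Icc p q := Icc_subset_Icc hs'.1 ht'.2
  refine ⟨s', t', ht'.1, hsub, subset_antisymm ?_ ?_⟩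
  · rintro _ ⟨z, hz, rfl⟩
    constructor
    · rcases hz.1.eq_or_lt with rfl | h
      exacts [hgs'.ge, (hgt_s z ⟨h, hz.2.trans ht'.2⟩).le]
    · rcases hz.2.lt_or_eq with h | rfl
      exacts [(hlt_t z ⟨hz.1, h⟩).le, hgt'.le]
  · simpa only [hgs', hgt'] using intermediate_value_Icc ht'.1 (hg.mono hsub)

theorem exists_Icc_iterate_mapsTo_and_image_eq (lo hi : ℕ → ℝ) (hle : ∀ i, lo i ≤ hi i)
    (hg : ∀ i, ContinuousOn g (Icc (lo i) (hi i)))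
    (hlo : ∀ i, g (lo i) ≤ lo (i + 1)) (hhi : ∀ i, hi (i + 1) ≤ g (hi i)) (k : ℕ) :
    ∃ s t, s ≤ t ∧ (∀ i ≤ k, MapsTo g^[i] (Icc s t) (Icc (lo i) (hi i))) ∧
      ContinuousOn g^[k] (Icc s t) ∧ g^[k] '' Icc s t = Icc (lo k) (hi k) := by
  induction k generalizing lo hi with
  | zero => exact ⟨lo 0, hi 0, hle 0, fun i hik => by simp [Nat.le_zero.1 hik, mapsTo_id],
      continuousOn_id, image_id _⟩
  | succ k ih =>
    obtain ⟨s, t, hst, hmaps, hcont, himage⟩ :=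
      ih (fun i => lo (i + 1)) (fun i => hi (i + 1)) (fun i => hle _) (fun i => hg _)
        (fun i => hlo _) (fun i => hhi _)
    have hsub : Icc s t ⊆ Icc (lo 1) (hi 1) := hmaps 0 k.zero_le
    obtain ⟨s', t', hst', hsub', himage'⟩ := exists_Icc_subset_image_eq_Icc (hle 0) (hg 0)
      ((hlo 0).trans (hsub ⟨le_rfl, hst⟩).1) hst ((hsub ⟨hst, le_rfl⟩).2.trans (hhi 0))
    have hgmaps : MapsTo g (Icc s' t') (Icc s t) := himage' ▸ mapsTo_image g _
    refine ⟨s', t', hst', fun i hik => ?_, ?_, ?_⟩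
    · cases i with
      | zero => exact hsub'
      | succ i =>
        rw [Function.iterate_succ]
        exact (hmaps i (by omega)).comp hgmaps
    · rw [Function.iterate_succ]
      exact hcont.comp ((hg 0).mono hsub') hgmaps
    · rw [Function.iterate_succ, image_comp, himage', himage]

theorem exists_point_of_prime_period_of_horseshoe {a u v d : ℝ} (hau : a ≤ u) (huv : u < v)
    (hvd : v ≤ d) (hA : ContinuousOn g (Icc a u)) (hB : ContinuousOn g (Icc v d))
    (hga : g a ≤ a) (hgu : d ≤ g u) (hgv : g v ≤ a) (hgd : d ≤ g d) (n : ℕ) :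
    ∃ x, g^[n] x = x ∧ ∀ m, 1 ≤ m → m < n → g^[m] x ≠ x := by
  -- the itinerary `A B ⋯ B A` (with `n - 1` letters `B`), repeated with period `n`,
  -- where `A = [a, u]` and `B = [v, d]`
  obtain ⟨s, t, hst, hmaps, hcont, himage⟩ := exists_Icc_iterate_mapsTo_and_image_eq
    (fun i => if n ∣ i then a else v) (fun i => if n ∣ i then u else d)
    (fun i => by split_ifs <;> linarith) (fun i => by split_ifs; exacts [hA, hB])
    (fun i => by split_ifs <;> linarith) (fun i => by split_ifs <;> linarith) n
  have hsA : Icc s t ⊆ Icc a u := fun z hz => by simpa using hmaps 0 n.zero_le hz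
  simp only [dvd_refl, if_true] at himage
  obtain ⟨x, hx, hfix⟩ := exists_mem_Icc_isFixedPt_of_surjOn hcont hst
    (show Icc s t ⊆ g^[n] '' Icc s t from himage ▸ hsA)
  refine ⟨x, hfix, fun m hm hmn heq => ?_⟩
  have hxB := hmaps m hmn.le hx
  rw [if_neg (Nat.not_dvd_of_pos_of_lt hm hmn), if_neg (Nat.not_dvd_of_pos_of_lt hm hmn),
    heq] at hxB
  linarith [(hsA hx).2, hxB.1]

end IntervalMaps

section DerivSign

variable {f : ℝ → ℝ} {p : ℝ}

theorem eventually_nhdsGT_lt_of_deriv_neg (h : deriv f p < 0) : ∀ᶠ x in 𝓝[>] p, f x < f p := by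
  have hslope := hasDerivAt_iff_tendsto_slope.mp (differentiableAt_of_deriv_ne_zero h.ne).hasDerivAt
  filter_upwards [(hslope.mono_left (nhdsGT_le_nhdsNE p)).eventually_lt_const h,
    self_mem_nhdsWithin] with x hs hx
  rw [slope_def_field, div_lt_iff₀ (sub_pos.2 hx)] at hs
  linarith

theorem eventually_nhdsLT_gt_of_deriv_neg (h : deriv f p < 0) : ∀ᶠ x in 𝓝[<] p, f p < f x := by
  have hslope := hasDerivAt_iff_tendsto_slope.mp (differentiableAt_of_deriv_ne_zero h.ne).hasDerivAt
  filter_upwards [(hslope.mono_left (nhdsLT_le_nhdsNE p)).eventually_lt_const h,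
    self_mem_nhdsWithin] with x hs hx
  rw [slope_def_field, div_lt_iff_of_neg (sub_neg.2 hx)] at hs
  linarith

theorem exists_mem_Icc_eq_zero_and_deriv_pos (hf : Continuous f)
    (hsimple : ∀ x, f x = 0 → deriv f x ≠ 0) {q : ℝ} (hpq : p < q) (hp : f p = 0) (hq : f q = 0) :
    ∃ r ∈ Icc p q, f r = 0 ∧ 0 < deriv f r := by
  rcases (hsimple p hp).lt_or_gt with hp' | hp'
  · -- `f` goes negative right after `p`; the first root after that is crossed upwards
    obtain ⟨t, hft, ht⟩ := ((eventually_nhdsGT_lt_of_deriv_neg hp').and (Ioo_mem_nhdsGT hpq)).exists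
    rw [hp] at hft
    obtain ⟨r, hr, hfr, hneg⟩ :=
      exists_mem_Icc_eq_and_forall_Ico_lt ht.2.le hf.continuousOn hft.le hq.ge
    have htr : t < r := hr.1.lt_of_ne (by rintro rfl; linarith)
    refine ⟨r, ⟨ht.1.le.trans hr.1, hr.2⟩, hfr, (not_lt.1 fun h => ?_).lt_of_ne' (hsimple r hfr)⟩
    obtain ⟨z, hfz, hz⟩ := ((eventually_nhdsLT_gt_of_deriv_neg h).and (Ioo_mem_nhdsLT htr)).exists
    linarith [hneg z ⟨hz.1.le, hz.2⟩]
  · exact ⟨p, left_mem_Icc.2 hpq.le, hp, hp'⟩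

end DerivSign

section DampedNewton

variable {lam : ℝ} {f : ℝ → ℝ}

theorem dampedModNewtonFun_eq_self_of_root {r : ℝ} (hr : f r = 0) :
    dampedModNewtonFun lam f r = r := by
  simp [dampedModNewtonFun, dampedNewtonFun, hr]

theorem dampedModNewtonFun_neg : dampedModNewtonFun lam (-f) = dampedModNewtonFun lam f := by
  ext x
  simp only [dampedModNewtonFun, dampedNewtonFun, deriv.neg', Pi.neg_apply, neg_div_neg_eq]

theorem deriv_neg_comp_neg (x : ℝ) : deriv (fun y => -f (-y)) x = deriv f (-x) := by
  simp [deriv_comp_neg]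

theorem dampedModNewtonFun_neg_comp_neg (x : ℝ) :
    dampedModNewtonFun lam (fun y => -f (-y)) x = -dampedModNewtonFun lam f (-x) := by
  have hN : dampedNewtonFun lam (fun y => -f (-y)) x = -dampedNewtonFun lam f (-x) := by
    simp only [dampedNewtonFun, deriv_neg_comp_neg]
    ring
  simp only [dampedModNewtonFun, hN, deriv_neg_comp_neg, neg_neg]
  ring

theorem NewtonClass.neg (hf : NewtonClass f) : NewtonClass (-f) := by
  obtain ⟨hC, hroot, hcrit⟩ := hf
  refine ⟨hC.neg, fun x hx => ?_, fun x hx => ?_⟩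
  · simpa [deriv.neg'] using hroot x (by simpa using hx)
  · simpa [deriv.neg'] using hcrit x (by simpa [deriv.neg'] using hx)

theorem continuousOn_dampedModNewtonFun (hf : ContDiff ℝ 1 f) :
    ContinuousOn (dampedModNewtonFun lam f) {x | deriv f x ≠ 0} := by
  have hf₀ := hf.continuous.continuousOn (s := {x | deriv f x ≠ 0})
  have hf₁ := (hf.continuous_deriv le_rfl).continuousOn (s := {x | deriv f x ≠ 0})
  have hN : ContinuousOn (dampedNewtonFun lam f) {x | deriv f x ≠ 0} :=
    continuousOn_id.sub (continuousOn_const.mul (hf₀.div hf₁ fun _ hx => hx))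
  exact hN.sub (continuousOn_const.mul
    ((hf.continuous.comp_continuousOn hN).div hf₁ fun _ hx => hx))

theorem tendsto_dampedModNewtonFun_atTop {l : Filter ℝ} {c y : ℝ} (hlam : 0 < lam)
    (hbot : Tendsto f atBot atBot) (hl : l ≤ 𝓝 c) (hfy : Tendsto f l (𝓝 y)) (hy : 0 < y)
    (hf' : Tendsto (deriv f) l (𝓝[>] 0)) :
    Tendsto (dampedModNewtonFun lam f) l atTop := by
  have hx : Tendsto (fun x : ℝ => x) l (𝓝 c) := tendsto_id.mono_right hl
  have hinv : Tendsto (fun x => lam * (deriv f x)⁻¹) l atTop :=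
    (tendsto_inv_nhdsGT_zero.comp hf').const_mul_atTop hlam
  have hN : Tendsto (dampedNewtonFun lam f) l atBot :=
    (hx.add_atBot (tendsto_neg_atTop_atBot.comp (hfy.pos_mul_atTop hy hinv))).congr fun x => by
      simp only [dampedNewtonFun, Function.comp_apply]; ring
  have hsum : Tendsto (fun x => f x + f (dampedNewtonFun lam f x)) l atBot :=
    hfy.add_atBot (hbot.comp hN)
  refine (hx.add_atTop (tendsto_neg_atBot_atTop.comp (hinv.atTop_mul_atBot₀ hsum))).congr
    fun x => ?_
  simp only [dampedModNewtonFun, dampedNewtonFun, Function.comp_apply]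
  ring

theorem exists_Icc_continuousOn_and_le_dampedModNewtonFun (hf : ContDiff ℝ 1 f) (hlam : 0 < lam)
    (hbot : Tendsto f atBot atBot) {a c : ℝ} (ha : f a = 0) (ha' : 0 < deriv f a) (hac : a < c)
    (hc : deriv f c = 0) (B : ℝ) :
    ∃ u ∈ Ioo a c, ContinuousOn (dampedModNewtonFun lam f) (Icc a u) ∧
      B ≤ dampedModNewtonFun lam f u := by
  have hf₁ := hf.continuous_deriv le_rfl
  -- `c'` is the first critical point after `a`
  obtain ⟨c', hc', hc'0, hpos⟩ := exists_mem_Icc_eq_and_forall_Ico_lt hac.le hf₁.neg.continuousOn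
    (neg_nonpos.2 ha'.le) (by simp [hc])
  simp only [Pi.neg_apply, neg_eq_zero, neg_lt_zero] at hc'0 hpos
  have hac' : a < c' := hc'.1.lt_of_ne (by rintro rfl; linarith)
  have hmono : StrictMonoOn f (Icc a c') := strictMonoOn_of_deriv_pos (convex_Icc a c')
    hf.continuous.continuousOn fun x hx => by rw [interior_Icc] at hx; exact hpos x ⟨hx.1.le, hx.2⟩
  have hfc' : 0 < f c' := ha ▸ hmono (left_mem_Icc.2 hac'.le) (right_mem_Icc.2 hac'.le) hac'
  have hf'lim : Tendsto (deriv f) (𝓝[<] c') (𝓝[>] 0) := tendsto_nhdsWithin_iff.2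
    ⟨hc'0 ▸ hf₁.continuousAt.tendsto.mono_left nhdsWithin_le_nhds,
      eventually_of_mem (Ioo_mem_nhdsLT hac') fun x hx => hpos x ⟨hx.1.le, hx.2⟩⟩
  have hlim := tendsto_dampedModNewtonFun_atTop hlam hbot nhdsWithin_le_nhds
    (hf.continuous.continuousAt.tendsto.mono_left nhdsWithin_le_nhds) hfc' hf'lim
  obtain ⟨u, hMu, hu⟩ := ((hlim.eventually_ge_atTop B).and (Ioo_mem_nhdsLT hac')).exists
  exact ⟨u, ⟨hu.1, hu.2.trans_le hc'.2⟩, (continuousOn_dampedModNewtonFun hf).mono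
    fun x hx => (hpos x ⟨hx.1, hx.2.trans_lt hu.2⟩).ne', hMu⟩

theorem exists_Icc_continuousOn_and_dampedModNewtonFun_le (hf : ContDiff ℝ 1 f) (hlam : 0 < lam)
    (htop : Tendsto f atTop atTop) {c d : ℝ} (hd : f d = 0) (hd' : 0 < deriv f d) (hcd : c < d)
    (hc : deriv f c = 0) (B : ℝ) :
    ∃ v ∈ Ioo c d, ContinuousOn (dampedModNewtonFun lam f) (Icc v d) ∧
      dampedModNewtonFun lam f v ≤ B := by
  obtain ⟨u, hu, hcont, hMu⟩ := exists_Icc_continuousOn_and_le_dampedModNewtonFun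
    (f := fun y => -f (-y)) (lam := lam) (hf.comp contDiff_neg).neg hlam
    (tendsto_neg_atTop_atBot.comp (htop.comp tendsto_neg_atBot_atTop)) (by simp [hd])
    (by rwa [deriv_neg_comp_neg, neg_neg]) (neg_lt_neg hcd)
    (by rw [deriv_neg_comp_neg, neg_neg, hc]) (-B)
  have hM (x : ℝ) :
      dampedModNewtonFun lam f x = -dampedModNewtonFun lam (fun y => -f (-y)) (-x) := by
    rw [dampedModNewtonFun_neg_comp_neg, neg_neg, neg_neg]
  refine ⟨-u, ⟨lt_neg_of_lt_neg hu.2, neg_lt.1 hu.1⟩, ?_, by rw [hM, neg_neg]; linarith⟩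
  exact (hcont.comp continuousOn_neg fun x hx => ⟨neg_le_neg hx.2, neg_le.1 hx.1⟩).neg.congr
    fun x _ => hM x

end DampedNewton

/-- For any damping parameter `λ > 0`, if `f` is a Newton-class function with
infinite limits of opposite signs at `±∞` and at least four real roots, then
`M_{λ,f}` has periodic points of every prime period. -/
theorem dampedModNewtonFun_periodic_points_of_every_prime_period
    (lam : ℝ) (hlam : 0 < lam)
    (f : ℝ → ℝ)
    (hf : NewtonClass f)
    (hlim : (Filter.Tendsto f Filter.atTop Filter.atTop ∧
              Filter.Tendsto f Filter.atBot Filter.atBot) ∨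
            (Filter.Tendsto f Filter.atTop Filter.atBot ∧
              Filter.Tendsto f Filter.atBot Filter.atTop))
    (hroots : ∃ r₁ r₂ r₃ r₄ : ℝ, r₁ < r₂ ∧ r₂ < r₃ ∧ r₃ < r₄ ∧
      f r₁ = 0 ∧ f r₂ = 0 ∧ f r₃ = 0 ∧ f r₄ = 0) :
    ∀ n : ℕ, 1 ≤ n → ∃ a : ℝ, (dampedModNewtonFun lam f)^[n] a = a ∧
      ∀ m : ℕ, 1 ≤ m → m < n → (dampedModNewtonFun lam f)^[m] a ≠ a := by
  wlog hlim' : Tendsto f atTop atTop ∧ Tendsto f atBot atBot generalizing f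
  · have hneg : Tendsto (-f) atTop atTop ∧ Tendsto (-f) atBot atBot := by
      obtain ⟨htop, hbot⟩ := hlim.resolve_left hlim'
      exact ⟨tendsto_neg_atBot_atTop.comp htop, tendsto_neg_atTop_atBot.comp hbot⟩
    simpa only [dampedModNewtonFun_neg] using this (-f) hf.neg (Or.inl hneg)
      (by simpa only [Pi.neg_apply, neg_eq_zero] using hroots) hneg
  obtain ⟨htop, hbot⟩ := hlim'
  obtain ⟨r₁, r₂, r₃, r₄, h₁₂, h₂₃, h₃₄, hr₁, hr₂, hr₃, hr₄⟩ := hroots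
  have hf₀ : Continuous f := hf.1.continuous
  obtain ⟨a, ha, hfa, hf'a⟩ := exists_mem_Icc_eq_zero_and_deriv_pos hf₀ hf.2.1 h₁₂ hr₁ hr₂
  obtain ⟨d, hd, hfd, hf'd⟩ := exists_mem_Icc_eq_zero_and_deriv_pos hf₀ hf.2.1 h₃₄ hr₃ hr₄
  obtain ⟨c, hc, hf'c⟩ := exists_deriv_eq_zero (ha.2.trans_lt (h₂₃.trans_le hd.1))
    hf₀.continuousOn (hfa.trans hfd.symm)
  have hC1 : ContDiff ℝ 1 f := hf.1.of_le one_le_two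
  obtain ⟨u, hu, hMu_cont, hMu⟩ :=
    exists_Icc_continuousOn_and_le_dampedModNewtonFun hC1 hlam hbot hfa hf'a hc.1 hf'c d
  obtain ⟨v, hv, hMv_cont, hMv⟩ :=
    exists_Icc_continuousOn_and_dampedModNewtonFun_le hC1 hlam htop hfd hf'd hc.2 hf'c a
  exact fun n _ => exists_point_of_prime_period_of_horseshoe hu.1.le (hu.2.trans hv.1) hv.2.le
    hMu_cont hMv_cont (dampedModNewtonFun_eq_self_of_root hfa).le hMu hMv
    (dampedModNewtonFun_eq_self_of_root hfd).ge n
end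

section
/- Let λ > 0 be a real damping parameter, let f be a function in the Newton class, and let c₁ < c₂ be two consecutive roots of f′ (i.e. f′(c₁) = f′(c₂) = 0 and f′(x) ≠ 0 for x ∈ (c₁, c₂)) such that f has exactly one root in the open interval (c₁, c₂). Then the one-sided limits of N_{λ,f} at c₁ from the right and at c₂ from the left are infinite and of opposite signs: either lim_{x→c₁+} N_{λ,f}(x) = +∞ and lim_{x→c₂−} N_{λ,f}(x) = −∞, or lim_{x→c₁+} N_{λ,f}(x) = −∞ and lim_{x→c₂−} N_{λ,f}(x) = +∞. -/
/-! Since `f'` has no zero in `(c₁, c₂)` it has constant sign there (Darboux), and replacing `f`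
by `-f`, which does not change `N_{λ,f}`, we may assume `f' > 0`. Then `f` increases through its
root, so `f c₁ < 0 < f c₂`, while `f' → 0⁺` at both ends; hence `f / f'` tends to `-∞` at `c₁⁺`
and to `+∞` at `c₂⁻`, and `N_{λ,f} = x - λ f / f'` to `+∞` and `-∞` respectively. -/

open Filter Set Topology

section DivNhdsGTZero

variable {𝕜 α : Type*} [Field 𝕜] [LinearOrder 𝕜] [IsStrictOrderedRing 𝕜]
  [TopologicalSpace 𝕜] [OrderTopology 𝕜] {l : Filter α} {f g : α → 𝕜} {C : 𝕜}

theorem Filter.Tendsto.neg_div_nhdsGT_zero (hC : C < 0) (hf : Tendsto f l (𝓝 C))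
    (hg : Tendsto g l (𝓝[>] 0)) : Tendsto (fun x => f x / g x) l atBot := by
  simpa only [div_eq_mul_inv, Pi.inv_apply] using hf.neg_mul_atTop hC hg.inv_tendsto_nhdsGT_zero

theorem Filter.Tendsto.pos_div_nhdsGT_zero (hC : 0 < C) (hf : Tendsto f l (𝓝 C))
    (hg : Tendsto g l (𝓝[>] 0)) : Tendsto (fun x => f x / g x) l atTop := by
  simpa only [div_eq_mul_inv, Pi.inv_apply] using hf.pos_mul_atTop hC hg.inv_tendsto_nhdsGT_zero

end DivNhdsGTZero

section DampedNewton

variable {lam : ℝ} {f : ℝ → ℝ} {l : Filter ℝ} {c : ℝ}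

theorem dampedNewtonFun_neg (lam : ℝ) (f : ℝ → ℝ) :
    dampedNewtonFun lam (-f) = dampedNewtonFun lam f := by
  funext x
  simp only [dampedNewtonFun, deriv.neg, Pi.neg_apply, neg_div_neg_eq]

theorem tendsto_dampedNewtonFun_atTop (hlam : 0 < lam) (hl : l ≤ 𝓝 c)
    (hq : Tendsto (fun x => f x / deriv f x) l atBot) :
    Tendsto (dampedNewtonFun lam f) l atTop := by
  have hstep : Tendsto (fun x => -(lam * (f x / deriv f x))) l atTop :=
    tendsto_neg_atBot_atTop.comp (hq.const_mul_atBot hlam)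
  unfold dampedNewtonFun
  simpa only [id_eq, sub_eq_add_neg] using (tendsto_id.mono_right hl).add_atTop hstep

theorem tendsto_dampedNewtonFun_atBot (hlam : 0 < lam) (hl : l ≤ 𝓝 c)
    (hq : Tendsto (fun x => f x / deriv f x) l atTop) :
    Tendsto (dampedNewtonFun lam f) l atBot := by
  have hstep : Tendsto (fun x => -(lam * (f x / deriv f x))) l atBot :=
    tendsto_neg_atTop_atBot.comp (hq.const_mul_atTop hlam)
  unfold dampedNewtonFun
  simpa only [id_eq, sub_eq_add_neg] using (tendsto_id.mono_right hl).add_atBot hstep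

theorem tendsto_dampedNewtonFun_of_deriv_pos (hlam : 0 < lam) (hf : Continuous f)
    {c₁ c₂ r : ℝ} (hd₁ : ContinuousAt (deriv f) c₁) (hd₂ : ContinuousAt (deriv f) c₂)
    (hc₁ : deriv f c₁ = 0) (hc₂ : deriv f c₂ = 0) (hpos : ∀ x ∈ Ioo c₁ c₂, 0 < deriv f x)
    (hr : r ∈ Ioo c₁ c₂) (hfr : f r = 0) :
    Tendsto (dampedNewtonFun lam f) (𝓝[>] c₁) atTop ∧
      Tendsto (dampedNewtonFun lam f) (𝓝[<] c₂) atBot := by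
  have hlt : c₁ < c₂ := hr.1.trans hr.2
  have hmono : StrictMonoOn f (Icc c₁ c₂) :=
    strictMonoOn_of_deriv_pos (convex_Icc c₁ c₂) hf.continuousOn (by rwa [interior_Icc])
  have hf₁ : f c₁ < 0 := hfr ▸ hmono (left_mem_Icc.2 hlt.le) (Ioo_subset_Icc_self hr) hr.1
  have hf₂ : 0 < f c₂ := hfr ▸ hmono (Ioo_subset_Icc_self hr) (right_mem_Icc.2 hlt.le) hr.2
  have hd₁' : Tendsto (deriv f) (𝓝[>] c₁) (𝓝[>] 0) :=
    tendsto_nhdsWithin_of_tendsto_nhds_of_eventually_within _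
      (hc₁ ▸ hd₁.tendsto.mono_left nhdsWithin_le_nhds)
      (eventually_of_mem (Ioo_mem_nhdsGT hlt) hpos)
  have hd₂' : Tendsto (deriv f) (𝓝[<] c₂) (𝓝[>] 0) :=
    tendsto_nhdsWithin_of_tendsto_nhds_of_eventually_within _
      (hc₂ ▸ hd₂.tendsto.mono_left nhdsWithin_le_nhds)
      (eventually_of_mem (Ioo_mem_nhdsLT hlt) hpos)
  exact ⟨tendsto_dampedNewtonFun_atTop hlam nhdsWithin_le_nhds
      (((hf.tendsto c₁).mono_left nhdsWithin_le_nhds).neg_div_nhdsGT_zero hf₁ hd₁'),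
    tendsto_dampedNewtonFun_atBot hlam nhdsWithin_le_nhds
      (((hf.tendsto c₂).mono_left nhdsWithin_le_nhds).pos_div_nhdsGT_zero hf₂ hd₂')⟩

end DampedNewton

theorem dampedNewtonFun_onesided_limits_infinite_general
    (lam : ℝ) (hlam : 0 < lam)
    (f : ℝ → ℝ) (hf : NewtonClass f)
    (c₁ c₂ : ℝ)
    (hc₁ : deriv f c₁ = 0) (hc₂ : deriv f c₂ = 0)
    (hconsec : ∀ x ∈ Set.Ioo c₁ c₂, deriv f x ≠ 0)
    (hroot : ∃! r, r ∈ Set.Ioo c₁ c₂ ∧ f r = 0) :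
    (Filter.Tendsto (dampedNewtonFun lam f) (nhdsWithin c₁ (Set.Ioi c₁)) Filter.atTop ∧
       Filter.Tendsto (dampedNewtonFun lam f) (nhdsWithin c₂ (Set.Iio c₂)) Filter.atBot) ∨
    (Filter.Tendsto (dampedNewtonFun lam f) (nhdsWithin c₁ (Set.Ioi c₁)) Filter.atBot ∧
       Filter.Tendsto (dampedNewtonFun lam f) (nhdsWithin c₂ (Set.Iio c₂)) Filter.atTop) := by
  obtain ⟨hC2, -, -⟩ := hf
  obtain ⟨r, ⟨hr, hfr⟩, -⟩ := hroot
  have hd : Continuous (deriv f) := hC2.continuous_deriv (by norm_num)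
  have hsign : (∀ x ∈ Ioo c₁ c₂, deriv f x < 0) ∨ ∀ x ∈ Ioo c₁ c₂, 0 < deriv f x :=
    hasDerivWithinAt_forall_lt_or_forall_gt_of_forall_ne (convex_Ioo c₁ c₂)
      (fun x _ => ((hC2.differentiable (by norm_num)) x).hasDerivAt.hasDerivWithinAt) hconsec
  left
  rcases hsign with hneg | hpos
  · have hd' : Continuous (deriv (-f)) := by rw [deriv.neg']; exact hd.neg
    rw [← dampedNewtonFun_neg]
    refine tendsto_dampedNewtonFun_of_deriv_pos hlam hC2.continuous.neg hd'.continuousAt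
      hd'.continuousAt ?_ ?_ (fun x hx => ?_) hr (by simp [hfr])
    · simp [deriv.neg, hc₁]
    · simp [deriv.neg, hc₂]
    · simpa [deriv.neg] using hneg x hx
  · exact tendsto_dampedNewtonFun_of_deriv_pos hlam hC2.continuous hd.continuousAt
      hd.continuousAt hc₁ hc₂ hpos hr hfr

/-- For any damping parameter `λ > 0` and Newton-class function `f`, if
`c₁ < c₂` are consecutive roots of `f'` with exactly one root of `f` in
`(c₁, c₂)`, then the one-sided limits of `N_{λ,f}` at `c₁+` and `c₂−` are
infinite with opposite signs. -/
theorem dampedNewtonFun_onesided_limits_infinite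
    (lam : ℝ) (hlam : 0 < lam)
    (f : ℝ → ℝ) (hf : NewtonClass f)
    (c₁ c₂ : ℝ) (hlt : c₁ < c₂)
    (hc₁ : deriv f c₁ = 0) (hc₂ : deriv f c₂ = 0)
    (hconsec : ∀ x ∈ Set.Ioo c₁ c₂, deriv f x ≠ 0)
    (hroot : ∃! r, r ∈ Set.Ioo c₁ c₂ ∧ f r = 0) :
    (Filter.Tendsto (dampedNewtonFun lam f) (nhdsWithin c₁ (Set.Ioi c₁)) Filter.atTop ∧
       Filter.Tendsto (dampedNewtonFun lam f) (nhdsWithin c₂ (Set.Iio c₂)) Filter.atBot) ∨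
    (Filter.Tendsto (dampedNewtonFun lam f) (nhdsWithin c₁ (Set.Ioi c₁)) Filter.atBot ∧
       Filter.Tendsto (dampedNewtonFun lam f) (nhdsWithin c₂ (Set.Iio c₂)) Filter.atTop) :=
  dampedNewtonFun_onesided_limits_infinite_general lam hlam f hf c₁ c₂ hc₁ hc₂ hconsec hroot
end
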